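/- arXiv:1404.5113 — 14 statements merged into one kernel-verified Lean document; each statement's English description precedes it below -/
import Mathlib

section
/- If Σ_{i=1}^p α_i > Σ_{j=1}^q β_j with all α_i, β_j > 0, all the sets Ω_i are nonempty, closed, convex and bounded, and the Θ_j are nonempty closed convex sets, then the function f(x) = Σ_i α_i d(x; Ω_i) − Σ_j β_j d(x; Θ_j) is coercive (f(x) → +∞ as ‖x‖ → ∞), and hence attains its minimum over any nonempty closed convex set S ⊂ R^n. -/
/-! Each `d(x; Ω_i)` is at least `‖x‖ - C_i` with `C_i` a bound for `Ω_i`, and each `d(x; Θ_j)` is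
at most `‖x‖ + ‖θ_j‖` for a point `θ_j ∈ Θ_j`. Hence `f x ≥ (∑ α - ∑ β) ‖x‖ - K`, which is coercive
because `∑ α > ∑ β`. A continuous coercive function on `ℝⁿ` attains its minimum on any nonempty
closed set, since outside a large ball it exceeds its value at a given point of the set. -/

open Filter Metric

section InfDist

variable {E : Type*} [SeminormedAddCommGroup E] {s : Set E}

lemma norm_sub_le_infDist {C : ℝ} (hs : s.Nonempty) (hC : ∀ y ∈ s, ‖y‖ ≤ C) (x : E) :
    ‖x‖ - C ≤ infDist x s :=
  (le_infDist hs).2 fun y hy => by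
    linarith [hC y hy, norm_sub_norm_le x y, dist_eq_norm x y]

lemma infDist_le_norm_add_norm {y : E} (hy : y ∈ s) (x : E) : infDist x s ≤ ‖x‖ + ‖y‖ :=
  (infDist_le_dist_of_mem hy).trans ((dist_eq_norm x y).trans_le (norm_sub_le x y))

lemma exists_mul_norm_sub_le_sum_infDist_sub_sum_infDist {ι κ : Type*} [Fintype ι] [Fintype κ]
    {Ω : ι → Set E} {Θ : κ → Set E} {α : ι → ℝ} {β : κ → ℝ}
    (hΩ : ∀ i, (Ω i).Nonempty ∧ Bornology.IsBounded (Ω i)) (hΘ : ∀ j, (Θ j).Nonempty)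
    (hα : ∀ i, 0 ≤ α i) (hβ : ∀ j, 0 ≤ β j) :
    ∃ K, ∀ x, (∑ i, α i - ∑ j, β j) * ‖x‖ - K ≤
      ∑ i, α i * infDist x (Ω i) - ∑ j, β j * infDist x (Θ j) := by
  choose C hC using fun i => (hΩ i).2.exists_norm_le
  choose θ hθ using hΘ
  refine ⟨∑ i, α i * C i + ∑ j, β j * ‖θ j‖, fun x => ?_⟩
  calc (∑ i, α i - ∑ j, β j) * ‖x‖ - (∑ i, α i * C i + ∑ j, β j * ‖θ j‖)
      = ∑ i, α i * (‖x‖ - C i) - ∑ j, β j * (‖x‖ + ‖θ j‖) := by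
        simp only [sub_mul, Finset.sum_mul, mul_sub, mul_add, Finset.sum_sub_distrib,
          Finset.sum_add_distrib]
        ring
    _ ≤ ∑ i, α i * infDist x (Ω i) - ∑ j, β j * infDist x (Θ j) := by
        gcongr with i _ j _
        · exact hα i
        · exact norm_sub_le_infDist (hΩ i).1 (hC i) x
        · exact hβ j
        · exact infDist_le_norm_add_norm (hθ j) x

end InfDist

section Coercive

variable {E : Type*} [SeminormedAddCommGroup E]

lemma coercive_of_mul_norm_sub_le {f : E → ℝ} {δ K : ℝ} (hδ : 0 < δ)
    (hf : ∀ x, δ * ‖x‖ - K ≤ f x) (M : ℝ) : ∃ R : ℝ, ∀ x, R ≤ ‖x‖ → M ≤ f x :=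
  ⟨(M + K) / δ, fun x hx => by
    have := (div_le_iff₀' hδ).1 hx
    linarith [hf x]⟩

lemma Continuous.exists_isMinOn_of_coercive [ProperSpace E] {f : E → ℝ} (hfc : Continuous f)
    (hcoe : ∀ M : ℝ, ∃ R : ℝ, ∀ x, R ≤ ‖x‖ → M ≤ f x) {S : Set E} (hS : S.Nonempty)
    (hSc : IsClosed S) : ∃ xb ∈ S, IsMinOn f S xb := by
  obtain ⟨x₀, hx₀⟩ := hS
  obtain ⟨R, hR⟩ := hcoe (f x₀)
  have hev : ∀ᶠ x in cocompact E, f x₀ ≤ f x :=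
    (tendsto_norm_cocompact_atTop.eventually (eventually_ge_atTop R)).mono hR
  exact hfc.continuousOn.exists_isMinOn' hSc hx₀ (hev.filter_mono inf_le_left)

end Coercive

theorem coercive_and_attains_min (n p q : ℕ)
    (Ω : Fin p → Set (EuclideanSpace ℝ (Fin n)))
    (Θ : Fin q → Set (EuclideanSpace ℝ (Fin n)))
    (hΩ : ∀ i, (Ω i).Nonempty ∧ IsClosed (Ω i) ∧ Convex ℝ (Ω i)
              ∧ Bornology.IsBounded (Ω i))
    (hΘ : ∀ j, (Θ j).Nonempty ∧ IsClosed (Θ j) ∧ Convex ℝ (Θ j))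
    (α : Fin p → ℝ) (β : Fin q → ℝ)
    (hα : ∀ i, 0 < α i) (hβ : ∀ j, 0 < β j)
    (hw : ∑ j, β j < ∑ i, α i)
    (f : EuclideanSpace ℝ (Fin n) → ℝ)
    (hf : ∀ x, f x = ∑ i, α i * Metric.infDist x (Ω i)
                    - ∑ j, β j * Metric.infDist x (Θ j)) :
    (∀ M : ℝ, ∃ R : ℝ, ∀ x, R ≤ ‖x‖ → M ≤ f x) ∧
    (∀ S : Set (EuclideanSpace ℝ (Fin n)), S.Nonempty → IsClosed S → Convex ℝ S →
      ∃ xb ∈ S, ∀ x ∈ S, f xb ≤ f x) := by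
  obtain ⟨K, hK⟩ := exists_mul_norm_sub_le_sum_infDist_sub_sum_infDist
    (fun i => ⟨(hΩ i).1, (hΩ i).2.2.2⟩) (fun j => (hΘ j).1) (fun i => (hα i).le)
    (fun j => (hβ j).le)
  have hcoe := coercive_of_mul_norm_sub_le (sub_pos.2 hw) fun x => (hf x).symm ▸ hK x
  have hfc : Continuous f := by
    rw [funext hf]
    exact (continuous_finsetSum _ fun i _ => continuous_const.mul (continuous_infDist_pt _)).sub
      (continuous_finsetSum _ fun j _ => continuous_const.mul (continuous_infDist_pt _))
  exact ⟨hcoe, fun S hS hSc _ => hfc.exists_isMinOn_of_coercive hcoe hS hSc⟩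
end

section
/- If Σ_{i=1}^p α_i < Σ_{j=1}^q β_j with all α_i, β_j > 0, S is a nonempty closed convex unbounded set, the Ω_i are nonempty closed convex sets, and all the sets Θ_j are nonempty, closed, convex and bounded, then inf{f(x) : x ∈ S} = −∞, where f(x) = Σ_i α_i d(x; Ω_i) − Σ_j β_j d(x; Θ_j). -/
/-! Each `d(·; Ω_i)` grows at most like `‖x‖`, while each `d(·; Θ_j)` grows at least like `‖x‖`
because `Θ_j` is bounded. Hence `f x ≤ -(∑ β_j - ∑ α_i) ‖x‖ + K` for a constant `K`, and points
of `S` of large norm make `f` arbitrarily negative. -/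

open Metric Finset

section
variable {E ι : Type*} [SeminormedAddCommGroup E] [Fintype ι]

lemma infDist_le_norm_add_norm_of_mem {x y : E} {s : Set E} (hy : y ∈ s) :
    infDist x s ≤ ‖x‖ + ‖y‖ :=
  (infDist_le_dist_of_mem hy).trans (dist_eq_norm x y ▸ norm_sub_le x y)

lemma norm_sub_le_infDist_of_forall_norm_le {s : Set E} (hs : s.Nonempty) {C : ℝ}
    (hC : ∀ y ∈ s, ‖y‖ ≤ C) (x : E) : ‖x‖ - C ≤ infDist x s :=
  (le_infDist hs).2 fun y hy => by
    rw [dist_eq_norm]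
    linarith [norm_sub_norm_le x y, hC y hy]

lemma exists_sum_mul_infDist_le {s : ι → Set E} (hs : ∀ i, (s i).Nonempty) {w : ι → ℝ}
    (hw : ∀ i, 0 ≤ w i) :
    ∃ K, ∀ x, ∑ i, w i * infDist x (s i) ≤ (∑ i, w i) * ‖x‖ + K := by
  choose y hy using hs
  refine ⟨∑ i, w i * ‖y i‖, fun x => ?_⟩
  rw [sum_mul, ← sum_add_distrib]
  gcongr with i
  rw [← mul_add]
  exact mul_le_mul_of_nonneg_left (infDist_le_norm_add_norm_of_mem (hy i)) (hw i)

lemma exists_le_sum_mul_infDist {s : ι → Set E} (hs : ∀ i, (s i).Nonempty)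
    (hb : ∀ i, Bornology.IsBounded (s i)) {w : ι → ℝ} (hw : ∀ i, 0 ≤ w i) :
    ∃ K, ∀ x, (∑ i, w i) * ‖x‖ - K ≤ ∑ i, w i * infDist x (s i) := by
  choose C hC using fun i => isBounded_iff_forall_norm_le.mp (hb i)
  refine ⟨∑ i, w i * C i, fun x => ?_⟩
  rw [sum_mul, ← sum_sub_distrib]
  gcongr with i
  rw [← mul_sub]
  exact mul_le_mul_of_nonneg_left (norm_sub_le_infDist_of_forall_norm_le (hs i) (hC i) x) (hw i)

end

theorem inf_eq_neg_infty_general (n p q : ℕ)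
    (S : Set (EuclideanSpace ℝ (Fin n)))
    (hSunb : ∀ R : ℝ, ∃ x ∈ S, R < ‖x‖)
    (Ω : Fin p → Set (EuclideanSpace ℝ (Fin n)))
    (Θ : Fin q → Set (EuclideanSpace ℝ (Fin n)))
    (hΩ : ∀ i, (Ω i).Nonempty ∧ IsClosed (Ω i) ∧ Convex ℝ (Ω i))
    (hΘ : ∀ j, (Θ j).Nonempty ∧ IsClosed (Θ j) ∧ Convex ℝ (Θ j)
              ∧ Bornology.IsBounded (Θ j))
    (α : Fin p → ℝ) (β : Fin q → ℝ)
    (hα : ∀ i, 0 < α i) (hβ : ∀ j, 0 < β j)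
    (hw : ∑ i, α i < ∑ j, β j)
    (f : EuclideanSpace ℝ (Fin n) → ℝ)
    (hf : ∀ x, f x = ∑ i, α i * Metric.infDist x (Ω i)
                    - ∑ j, β j * Metric.infDist x (Θ j)) :
    ∀ M : ℝ, ∃ x ∈ S, f x < M := by
  intro M
  obtain ⟨A, hA⟩ := exists_sum_mul_infDist_le (fun i => (hΩ i).1) fun i => (hα i).le
  obtain ⟨B, hB⟩ :=
    exists_le_sum_mul_infDist (fun j => (hΘ j).1) (fun j => (hΘ j).2.2.2) fun j => (hβ j).le
  have hδ : 0 < ∑ j, β j - ∑ i, α i := sub_pos.2 hw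
  obtain ⟨x, hxS, hx⟩ := hSunb ((A + B - M) / (∑ j, β j - ∑ i, α i))
  rw [div_lt_iff₀ hδ] at hx
  refine ⟨x, hxS, ?_⟩
  rw [hf]
  linarith [hA x, hB x]

theorem inf_eq_neg_infty (n p q : ℕ)
    (S : Set (EuclideanSpace ℝ (Fin n)))
    (hS : S.Nonempty) (hSc : IsClosed S) (hSconv : Convex ℝ S)
    (hSunb : ∀ R : ℝ, ∃ x ∈ S, R < ‖x‖)
    (Ω : Fin p → Set (EuclideanSpace ℝ (Fin n)))
    (Θ : Fin q → Set (EuclideanSpace ℝ (Fin n)))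
    (hΩ : ∀ i, (Ω i).Nonempty ∧ IsClosed (Ω i) ∧ Convex ℝ (Ω i))
    (hΘ : ∀ j, (Θ j).Nonempty ∧ IsClosed (Θ j) ∧ Convex ℝ (Θ j)
              ∧ Bornology.IsBounded (Θ j))
    (α : Fin p → ℝ) (β : Fin q → ℝ)
    (hα : ∀ i, 0 < α i) (hβ : ∀ j, 0 < β j)
    (hw : ∑ i, α i < ∑ j, β j)
    (f : EuclideanSpace ℝ (Fin n) → ℝ)
    (hf : ∀ x, f x = ∑ i, α i * Metric.infDist x (Ω i)
                    - ∑ j, β j * Metric.infDist x (Θ j)) :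
    ∀ M : ℝ, ∃ x ∈ S, f x < M :=
  inf_eq_neg_infty_general n p q S hSunb Ω Θ hΩ hΘ α β hα hβ hw f hf
end

section
/- If Σ_{i=1}^p α_i = Σ_{j=1}^q β_j with all α_i, β_j > 0, and all the sets Ω_i and Θ_j are nonempty, closed, convex and bounded in R^n, then the function f(x) = Σ_i α_i d(x; Ω_i) − Σ_j β_j d(x; Θ_j) is bounded on R^n: there exists γ > 0 with |f(x)| ≤ γ for all x. -/
/-!
For a nonempty bounded set `S`, the distance `d(x; S)` differs from `‖x‖ = d(x; {0})` by at most
the Hausdorff distance between `S` and `{0}`, uniformly in `x`.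
Since the weights on both sides have the same total, the `‖x‖` terms cancel in `f`, leaving a
weighted sum of bounded functions.
-/

open Metric Bornology

lemma abs_infDist_sub_dist_le_hausdorffDist {E : Type*} [PseudoMetricSpace E] {S : Set E}
    (hne : S.Nonempty) (hb : IsBounded S) (x c : E) :
    |infDist x S - dist x c| ≤ hausdorffDist S {c} := by
  have hfin : hausdorffEDist S {c} ≠ ⊤ :=
    hausdorffEDist_ne_top_of_nonempty_of_bounded hne (Set.singleton_nonempty c) hb
      isBounded_singleton
  have hfin' : hausdorffEDist {c} S ≠ ⊤ := by rwa [hausdorffEDist_comm]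
  rw [abs_sub_le_iff, ← infDist_singleton (x := x)]
  constructor
  · simpa [hausdorffDist_comm, add_comm] using infDist_le_infDist_add_hausdorffDist (x := x) hfin'
  · simpa [add_comm] using infDist_le_infDist_add_hausdorffDist (x := x) hfin

lemma abs_sum_mul_le_sum_abs_mul {ι : Type*} (s : Finset ι) (w g C : ι → ℝ)
    (hg : ∀ i ∈ s, |g i| ≤ C i) : |∑ i ∈ s, w i * g i| ≤ ∑ i ∈ s, |w i| * C i := by
  refine (Finset.abs_sum_le_sum_abs _ _).trans (Finset.sum_le_sum fun i hi => ?_)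
  rw [abs_mul]
  exact mul_le_mul_of_nonneg_left (hg i hi) (abs_nonneg _)

lemma sum_mul_sub_sum_mul_eq_of_sum_eq {ι κ : Type*} (s : Finset ι) (t : Finset κ)
    (α a : ι → ℝ) (β b : κ → ℝ) (hw : ∑ i ∈ s, α i = ∑ j ∈ t, β j) (r : ℝ) :
    ∑ i ∈ s, α i * a i - ∑ j ∈ t, β j * b j
      = ∑ i ∈ s, α i * (a i - r) - ∑ j ∈ t, β j * (b j - r) := by
  simp only [mul_sub, Finset.sum_sub_distrib, ← Finset.sum_mul, hw]
  ring

theorem f_bounded_when_equal_weights_general (n p q : ℕ)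
    (Ω : Fin p → Set (EuclideanSpace ℝ (Fin n)))
    (Θ : Fin q → Set (EuclideanSpace ℝ (Fin n)))
    (hΩ : ∀ i, (Ω i).Nonempty ∧ IsClosed (Ω i) ∧ Convex ℝ (Ω i)
              ∧ Bornology.IsBounded (Ω i))
    (hΘ : ∀ j, (Θ j).Nonempty ∧ IsClosed (Θ j) ∧ Convex ℝ (Θ j)
              ∧ Bornology.IsBounded (Θ j))
    (α : Fin p → ℝ) (β : Fin q → ℝ)
    (hw : ∑ i, α i = ∑ j, β j)
    (f : EuclideanSpace ℝ (Fin n) → ℝ)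
    (hf : ∀ x, f x = ∑ i, α i * Metric.infDist x (Ω i)
                    - ∑ j, β j * Metric.infDist x (Θ j)) :
    ∃ γ > 0, ∀ x, |f x| ≤ γ := by
  set A := ∑ i, |α i| * hausdorffDist (Ω i) {0}
  set B := ∑ j, |β j| * hausdorffDist (Θ j) {0}
  have hA : 0 ≤ A := Finset.sum_nonneg fun i _ => mul_nonneg (abs_nonneg _) hausdorffDist_nonneg
  have hB : 0 ≤ B := Finset.sum_nonneg fun j _ => mul_nonneg (abs_nonneg _) hausdorffDist_nonneg
  refine ⟨A + B + 1, by positivity, fun x => ?_⟩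
  have hΩx : |∑ i, α i * (infDist x (Ω i) - dist x 0)| ≤ A :=
    abs_sum_mul_le_sum_abs_mul _ _ _ _ fun i _ =>
      abs_infDist_sub_dist_le_hausdorffDist (hΩ i).1 (hΩ i).2.2.2 x 0
  have hΘx : |∑ j, β j * (infDist x (Θ j) - dist x 0)| ≤ B :=
    abs_sum_mul_le_sum_abs_mul _ _ _ _ fun j _ =>
      abs_infDist_sub_dist_le_hausdorffDist (hΘ j).1 (hΘ j).2.2.2 x 0
  rw [hf x, sum_mul_sub_sum_mul_eq_of_sum_eq _ _ _ _ _ _ hw (dist x 0)]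
  linarith [abs_sub _ _ |>.trans (add_le_add hΩx hΘx)]

theorem f_bounded_when_equal_weights (n p q : ℕ)
    (Ω : Fin p → Set (EuclideanSpace ℝ (Fin n)))
    (Θ : Fin q → Set (EuclideanSpace ℝ (Fin n)))
    (hΩ : ∀ i, (Ω i).Nonempty ∧ IsClosed (Ω i) ∧ Convex ℝ (Ω i)
              ∧ Bornology.IsBounded (Ω i))
    (hΘ : ∀ j, (Θ j).Nonempty ∧ IsClosed (Θ j) ∧ Convex ℝ (Θ j)
              ∧ Bornology.IsBounded (Θ j))
    (α : Fin p → ℝ) (β : Fin q → ℝ)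
    (hα : ∀ i, 0 < α i) (hβ : ∀ j, 0 < β j)
    (hw : ∑ i, α i = ∑ j, β j)
    (f : EuclideanSpace ℝ (Fin n) → ℝ)
    (hf : ∀ x, f x = ∑ i, α i * Metric.infDist x (Ω i)
                    - ∑ j, β j * Metric.infDist x (Θ j)) :
    ∃ γ > 0, ∀ x, |f x| ≤ γ :=
  f_bounded_when_equal_weights_general n p q Ω Θ hΩ hΘ α β hw f hf
end

section
/- Let Ω_1 ⊂ S be nonempty closed convex sets in R^n, let Θ_1,...,Θ_q be nonempty closed convex sets, β_j > 0, and α_1 = Σ_j β_j. If x̄ ∈ Ω_1 maximizes h(x) = Σ_j β_j d(x; Θ_j) over Ω_1, then x̄ minimizes f(x) = α_1 d(x; Ω_1) − Σ_j β_j d(x; Θ_j) over S. -/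
/-! Each `d(·; Θ_j)` is 1-Lipschitz, so `h` is `α₁`-Lipschitz. Comparing `x ∈ S` with points
`p ∈ Ω₁` gives `h x ≤ h p + α₁ ‖x - p‖ ≤ h x̄ + α₁ ‖x - p‖`, and taking the infimum over `p`
yields `h x ≤ h x̄ + α₁ d(x; Ω₁)`, i.e. `f x̄ = -h x̄ ≤ f x`. -/

open Metric

section

variable {α : Type*} [PseudoMetricSpace α]

theorem sum_mul_infDist_le_add_mul_dist {ι : Type*} (t : Finset ι) {β : ι → ℝ}
    (hβ : ∀ j ∈ t, 0 ≤ β j) (Θ : ι → Set α) (x y : α) :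
    ∑ j ∈ t, β j * infDist x (Θ j)
      ≤ ∑ j ∈ t, β j * infDist y (Θ j) + (∑ j ∈ t, β j) * dist x y := by
  rw [Finset.sum_mul, ← Finset.sum_add_distrib]
  refine Finset.sum_le_sum fun j hj => ?_
  rw [← mul_add]
  exact mul_le_mul_of_nonneg_left infDist_le_infDist_add_dist (hβ j hj)

theorem le_add_mul_infDist_of_forall_le {g : α → ℝ} {K : ℝ} (hK : 0 ≤ K)
    (hg : ∀ x y, g x ≤ g y + K * dist x y) {s : Set α} (hs : s.Nonempty) {M : ℝ}
    (hM : ∀ y ∈ s, g y ≤ M) (x : α) :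
    g x ≤ M + K * infDist x s := by
  have : Nonempty s := hs.to_subtype
  suffices g x - M ≤ K * infDist x s by linarith
  rw [infDist_eq_iInf, Real.mul_iInf_of_nonneg hK]
  exact le_ciInf fun y => by linarith [hg x y, hM y y.2]

end

theorem max_over_omega_solves_problem_general (n q : ℕ)
    (S Ω₁ : Set (EuclideanSpace ℝ (Fin n)))
    (Θ : Fin q → Set (EuclideanSpace ℝ (Fin n)))
    (β : Fin q → ℝ) (hβ : ∀ j, 0 < β j)
    (α₁ : ℝ) (hα₁ : α₁ = ∑ j, β j)
    (f h : EuclideanSpace ℝ (Fin n) → ℝ)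
    (hh : ∀ x, h x = ∑ j, β j * Metric.infDist x (Θ j))
    (hf : ∀ x, f x = α₁ * Metric.infDist x Ω₁
                    - ∑ j, β j * Metric.infDist x (Θ j))
    (xb : EuclideanSpace ℝ (Fin n)) (hxb : xb ∈ Ω₁)
    (hmax : ∀ x ∈ Ω₁, h x ≤ h xb) :
    ∀ x ∈ S, f xb ≤ f x := by
  intro x _
  have hβ₀ : ∀ j ∈ Finset.univ, 0 ≤ β j := fun j _ => (hβ j).le
  have h_lip : ∀ x y, h x ≤ h y + α₁ * dist x y := fun x y => by
    simpa only [hh, hα₁] using sum_mul_infDist_le_add_mul_dist _ hβ₀ Θ x y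
  have hα₁₀ : 0 ≤ α₁ := hα₁ ▸ Finset.sum_nonneg hβ₀
  have h_bound := le_add_mul_infDist_of_forall_le hα₁₀ h_lip ⟨xb, hxb⟩ hmax x
  rw [hf, hf, ← hh, ← hh, infDist_zero_of_mem hxb]
  linarith

theorem max_over_omega_solves_problem (n q : ℕ)
    (S Ω₁ : Set (EuclideanSpace ℝ (Fin n)))
    (hΩ₁ : Ω₁.Nonempty) (hΩ₁c : IsClosed Ω₁) (hΩ₁conv : Convex ℝ Ω₁)
    (hΩS : Ω₁ ⊆ S)
    (hS : S.Nonempty) (hSc : IsClosed S) (hSconv : Convex ℝ S)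
    (Θ : Fin q → Set (EuclideanSpace ℝ (Fin n)))
    (hΘ : ∀ j, (Θ j).Nonempty ∧ IsClosed (Θ j) ∧ Convex ℝ (Θ j))
    (β : Fin q → ℝ) (hβ : ∀ j, 0 < β j)
    (α₁ : ℝ) (hα₁ : α₁ = ∑ j, β j)
    (f h : EuclideanSpace ℝ (Fin n) → ℝ)
    (hh : ∀ x, h x = ∑ j, β j * Metric.infDist x (Θ j))
    (hf : ∀ x, f x = α₁ * Metric.infDist x Ω₁
                    - ∑ j, β j * Metric.infDist x (Θ j))
    (xb : EuclideanSpace ℝ (Fin n)) (hxb : xb ∈ Ω₁)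
    (hmax : ∀ x ∈ Ω₁, h x ≤ h xb) :
    ∀ x ∈ S, f xb ≤ f x :=
  max_over_omega_solves_problem_general n q S Ω₁ Θ β hβ α₁ hα₁ f h hh hf xb hxb hmax
end

section
/- Consider f(x) = Σ_{i=1}^p α_i d(x; Ω_i) − Σ_{j=1}^q β_j d(x; Θ_j) over a nonempty closed convex set S ⊂ R^n, where all Ω_i, Θ_j are nonempty closed convex, all weights positive, Ω_{i0} ⊂ S for some index i0, and α_{i0} > Σ_{i≠i0} α_i + Σ_j β_j. Then for every x ∈ S \ Ω_{i0} one has f(x) > f(P(x; Ω_{i0})); in particular every minimizer of f over S belongs to Ω_{i0}. -/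
/-!
Moving `x` to a nearest point `P` of `Ω i0` lowers the `i0`-th term of `f` by `α i0 * d`, where
`d = dist x P`, while every other term is a weighted distance function, hence Lipschitz, and changes
by at most `(∑_{i ≠ i0} α i + ∑_j β j) * d`. The majority condition makes the net change negative; as `P ∈ Ω i0 ⊆ S`,
no minimizer over `S` lies outside `Ω i0`.
-/

open Classical in
noncomputable def proj (n : ℕ) (Q : Set (EuclideanSpace ℝ (Fin n)))
    (x : EuclideanSpace ℝ (Fin n)) : EuclideanSpace ℝ (Fin n) :=
  if h : ∃ p ∈ Q, dist x p = Metric.infDist x Q then h.choose else x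

open Metric Finset

theorem proj_mem_and_dist_eq_infDist {n : ℕ} {Q : Set (EuclideanSpace ℝ (Fin n))}
    (hQ : Q.Nonempty) (hc : IsClosed Q) (x : EuclideanSpace ℝ (Fin n)) :
    proj n Q x ∈ Q ∧ dist x (proj n Q x) = infDist x Q := by
  obtain ⟨y, hy, hdy⟩ := hc.exists_infDist_eq_dist hQ x
  have hex : ∃ p ∈ Q, dist x p = infDist x Q := ⟨y, hy, hdy.symm⟩
  rw [proj, dif_pos hex]
  exact hex.choose_spec

section WeightedDistances

variable {X ι κ : Type*} [PseudoMetricSpace X]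

theorem sum_mul_infDist_le_add_dist (s : Finset ι) (w : ι → ℝ) (hw : ∀ i ∈ s, 0 ≤ w i)
    (A : ι → Set X) (x y : X) :
    ∑ i ∈ s, w i * infDist x (A i) ≤ ∑ i ∈ s, w i * infDist y (A i) + (∑ i ∈ s, w i) * dist x y := by
  rw [sum_mul, ← sum_add_distrib]
  gcongr with i hi
  rw [← mul_add]
  exact mul_le_mul_of_nonneg_left infDist_le_infDist_add_dist (hw i hi)

theorem sum_mul_infDist_sub_lt_of_majority [Fintype ι] [Fintype κ] [DecidableEq ι]
    (Ω : ι → Set X) (Θ : κ → Set X) (α : ι → ℝ) (β : κ → ℝ)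
    (hα : ∀ i, 0 ≤ α i) (hβ : ∀ j, 0 ≤ β j) (i0 : ι)
    (hmaj : ∑ i ∈ univ.erase i0, α i + ∑ j, β j < α i0)
    {x y : X} (hy : y ∈ Ω i0) (hxy : dist x y = infDist x (Ω i0)) (hpos : 0 < dist x y) :
    ∑ i, α i * infDist y (Ω i) - ∑ j, β j * infDist y (Θ j) <
      ∑ i, α i * infDist x (Ω i) - ∑ j, β j * infDist x (Θ j) := by
  have hx0 : ∑ i, α i * infDist x (Ω i) =
      α i0 * dist x y + ∑ i ∈ univ.erase i0, α i * infDist x (Ω i) := by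
    rw [← add_sum_erase _ _ (mem_univ i0), hxy]
  have hy0 : ∑ i, α i * infDist y (Ω i) = ∑ i ∈ univ.erase i0, α i * infDist y (Ω i) := by
    rw [← add_sum_erase _ _ (mem_univ i0), infDist_zero_of_mem hy, mul_zero, zero_add]
  have hΩ := sum_mul_infDist_le_add_dist (univ.erase i0) α (fun i _ => hα i) Ω y x
  have hΘ := sum_mul_infDist_le_add_dist univ β (fun j _ => hβ j) Θ x y
  have hgain := mul_lt_mul_of_pos_right hmaj hpos
  rw [dist_comm] at hΩ
  rw [hx0, hy0]
  linarith [add_mul (∑ i ∈ univ.erase i0, α i) (∑ j, β j) (dist x y)]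

end WeightedDistances

theorem majority_theorem_general (n p q : ℕ)
    (S : Set (EuclideanSpace ℝ (Fin n)))
    (Ω : Fin p → Set (EuclideanSpace ℝ (Fin n)))
    (Θ : Fin q → Set (EuclideanSpace ℝ (Fin n)))
    (hΩ : ∀ i, (Ω i).Nonempty ∧ IsClosed (Ω i) ∧ Convex ℝ (Ω i))
    (α : Fin p → ℝ) (β : Fin q → ℝ)
    (hα : ∀ i, 0 < α i) (hβ : ∀ j, 0 < β j)
    (i0 : Fin p) (hsub : Ω i0 ⊆ S)
    (hmaj : ∑ i ∈ Finset.univ.erase i0, α i + ∑ j, β j < α i0)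
    (f : EuclideanSpace ℝ (Fin n) → ℝ)
    (hf : ∀ x, f x = ∑ i, α i * Metric.infDist x (Ω i)
                    - ∑ j, β j * Metric.infDist x (Θ j)) :
    (∀ x ∈ S, x ∉ Ω i0 → f (proj n (Ω i0) x) < f x) ∧
    (∀ xb ∈ S, (∀ x ∈ S, f xb ≤ f x) → xb ∈ Ω i0) := by
  obtain ⟨hne, hcl, -⟩ := hΩ i0
  have descent : ∀ x ∈ S, x ∉ Ω i0 → f (proj n (Ω i0) x) < f x := by
    intro x _ hx
    obtain ⟨hPmem, hPdist⟩ := proj_mem_and_dist_eq_infDist hne hcl x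
    rw [hf, hf]
    exact sum_mul_infDist_sub_lt_of_majority Ω Θ α β (fun i => (hα i).le) (fun j => (hβ j).le)
      i0 hmaj hPmem hPdist (hPdist ▸ (hcl.notMem_iff_infDist_pos hne).1 hx)
  refine ⟨descent, fun xb hxb hmin => by_contra fun hxb' => ?_⟩
  exact (descent xb hxb hxb').not_ge (hmin _ (hsub (proj_mem_and_dist_eq_infDist hne hcl xb).1))

theorem majority_theorem (n p q : ℕ)
    (S : Set (EuclideanSpace ℝ (Fin n)))
    (hS : S.Nonempty) (hSc : IsClosed S) (hSconv : Convex ℝ S)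
    (Ω : Fin p → Set (EuclideanSpace ℝ (Fin n)))
    (Θ : Fin q → Set (EuclideanSpace ℝ (Fin n)))
    (hΩ : ∀ i, (Ω i).Nonempty ∧ IsClosed (Ω i) ∧ Convex ℝ (Ω i))
    (hΘ : ∀ j, (Θ j).Nonempty ∧ IsClosed (Θ j) ∧ Convex ℝ (Θ j))
    (α : Fin p → ℝ) (β : Fin q → ℝ)
    (hα : ∀ i, 0 < α i) (hβ : ∀ j, 0 < β j)
    (i0 : Fin p) (hsub : Ω i0 ⊆ S)
    (hmaj : ∑ i ∈ Finset.univ.erase i0, α i + ∑ j, β j < α i0)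
    (f : EuclideanSpace ℝ (Fin n) → ℝ)
    (hf : ∀ x, f x = ∑ i, α i * Metric.infDist x (Ω i)
                    - ∑ j, β j * Metric.infDist x (Θ j)) :
    (∀ x ∈ S, x ∉ Ω i0 → f (proj n (Ω i0) x) < f x) ∧
    (∀ xb ∈ S, (∀ x ∈ S, f xb ≤ f x) → xb ∈ Ω i0) :=
  majority_theorem_general n p q S Ω Θ hΩ α β hα hβ i0 hsub hmaj f hf
end

section
/- Let a_1,...,a_p, b_1,...,b_q ∈ R^n with positive weights α_i, β_j satisfying Σ_i α_i = Σ_j β_j, and let f(x) = Σ_i α_i ‖x − a_i‖ − Σ_j β_j ‖x − b_j‖. If w := Σ_i α_i a_i − Σ_j β_j b_j ≠ 0, then liminf_{‖x‖→∞} f(x) = −‖w‖; in particular f(x) ≥ −‖w‖ − C/‖x‖ for some constant C and all large ‖x‖, and f(kw) → −‖w‖ as k → ∞. -/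
/-!
Multiplying `f` by `‖x‖` linearises it at infinity: for each centre `c`,
`‖x‖ * ‖x - c‖ = ‖x‖ ^ 2 - ⟪c, x⟫ + O(‖c‖ ^ 2)` (Cauchy–Schwarz below, AM–GM above). Since the
weights have equal totals, the `‖x‖ ^ 2` terms cancel and `|‖x‖ * f x + ⟪w, x⟫| ≤ C`, i.e.
`f x = -⟪w, x / ‖x‖⟫ + O(1 / ‖x‖)`. The leading term is at least `-‖w‖`, with equality along the
ray through `w`.
-/

open Filter Topology

lemma Filter.liminf_eq_of_tendsto_of_eventually_le {α β : Type*} {F : Filter α} {l : Filter β}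
    [l.NeBot] {f h : α → ℝ} {g : β → α} {L : ℝ} (hh : Tendsto h F (𝓝 L)) (hhf : h ≤ᶠ[F] f)
    (hg : Tendsto g l F) (hfg : Tendsto (f ∘ g) l (𝓝 L)) :
    liminf f F = L := by
  have : F.NeBot := hg.neBot
  have hcob : IsCoboundedUnder (· ≥ ·) (map g l) f := by
    simpa [IsCoboundedUnder, map_map] using hfg.isCoboundedUnder_ge
  apply le_antisymm
  · calc liminf f F ≤ liminf f (map g l) :=
          liminf_le_liminf_of_le hg (hh.isBoundedUnder_ge.mono_ge hhf) hcob
      _ = L := by rw [← liminf_comp]; exact hfg.liminf_eq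
  · calc L = liminf h F := hh.liminf_eq.symm
      _ ≤ liminf f F := liminf_le_liminf hhf hh.isBoundedUnder_ge (hcob.mono (map_mono hg))

section InnerProductSpace

variable {E : Type*} [NormedAddCommGroup E] [InnerProductSpace ℝ E]

lemma norm_sq_sub_inner_le_norm_mul_norm_sub (x c : E) :
    ‖x‖ ^ 2 - inner ℝ c x ≤ ‖x‖ * ‖x - c‖ := by
  have h := real_inner_le_norm (x - c) x
  rw [inner_sub_left, real_inner_self_eq_norm_sq] at h
  linarith [mul_comm ‖x‖ ‖x - c‖]

lemma norm_mul_norm_sub_le (x c : E) :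
    ‖x‖ * ‖x - c‖ ≤ ‖x‖ ^ 2 - inner ℝ c x + ‖c‖ ^ 2 / 2 := by
  have h := two_mul_le_add_sq ‖x‖ ‖x - c‖
  rw [norm_sub_sq_real, real_inner_comm] at h
  linarith

lemma sum_mul_norm_sub_bounds {ι : Type*} [Fintype ι] (γ : ι → ℝ) (hγ : ∀ i, 0 ≤ γ i)
    (c : ι → E) (x : E) :
    ‖x‖ * ∑ i, γ i * ‖x - c i‖ - (∑ i, γ i) * ‖x‖ ^ 2 + inner ℝ (∑ i, γ i • c i) x ∈
      Set.Icc 0 ((∑ i, γ i * ‖c i‖ ^ 2) / 2) := by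
  have hsplit : ‖x‖ * ∑ i, γ i * ‖x - c i‖ - (∑ i, γ i) * ‖x‖ ^ 2 + inner ℝ (∑ i, γ i • c i) x =
      ∑ i, γ i * (‖x‖ * ‖x - c i‖ - (‖x‖ ^ 2 - inner ℝ (c i) x)) := by
    simp only [sum_inner, real_inner_smul_left, Finset.mul_sum, Finset.sum_mul,
      ← Finset.sum_sub_distrib, ← Finset.sum_add_distrib]
    exact Finset.sum_congr rfl fun i _ => by ring
  rw [hsplit, Finset.sum_div]
  refine ⟨Finset.sum_nonneg fun i _ => mul_nonneg (hγ i) ?_, Finset.sum_le_sum fun i _ => ?_⟩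
  · linarith [norm_sq_sub_inner_le_norm_mul_norm_sub x (c i)]
  · rw [mul_div_assoc]
    exact mul_le_mul_of_nonneg_left (by linarith [norm_mul_norm_sub_le x (c i)]) (hγ i)

lemma abs_norm_mul_sub_sum_mul_norm_sub_add_inner_le {ι κ : Type*} [Fintype ι] [Fintype κ]
    (a : ι → E) (b : κ → E) (α : ι → ℝ) (β : κ → ℝ) (hα : ∀ i, 0 ≤ α i) (hβ : ∀ j, 0 ≤ β j)
    (hsum : ∑ i, α i = ∑ j, β j) (x : E) :
    |‖x‖ * (∑ i, α i * ‖x - a i‖ - ∑ j, β j * ‖x - b j‖) +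
        inner ℝ (∑ i, α i • a i - ∑ j, β j • b j) x| ≤
      (∑ i, α i * ‖a i‖ ^ 2) / 2 + (∑ j, β j * ‖b j‖ ^ 2) / 2 := by
  obtain ⟨ha₀, ha₁⟩ := sum_mul_norm_sub_bounds α hα a x
  obtain ⟨hb₀, hb₁⟩ := sum_mul_norm_sub_bounds β hβ b x
  have hA : 0 ≤ (∑ i, α i * ‖a i‖ ^ 2) / 2 := le_trans ha₀ ha₁
  have hB : 0 ≤ (∑ j, β j * ‖b j‖ ^ 2) / 2 := le_trans hb₀ hb₁
  rw [hsum] at ha₀ ha₁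
  refine (congrArg abs ?_).trans_le (abs_sub_le_of_nonneg_of_le ha₀ ?_ hb₀ ?_)
  · rw [inner_sub_left]
    ring
  all_goals linarith

variable {f : E → ℝ} {w : E} {C : ℝ}

lemma abs_add_inner_div_norm_le (hf : ∀ x, |‖x‖ * f x + inner ℝ w x| ≤ C) {x : E} (hx : x ≠ 0) :
    |f x + inner ℝ w x / ‖x‖| ≤ C / ‖x‖ := by
  have hx' : 0 < ‖x‖ := norm_pos_iff.2 hx
  rw [le_div_iff₀ hx', ← abs_of_pos hx', ← abs_mul, abs_of_pos hx', add_mul,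
    div_mul_cancel₀ _ hx'.ne', mul_comm]
  exact hf x

lemma neg_norm_sub_div_norm_le (hf : ∀ x, |‖x‖ * f x + inner ℝ w x| ≤ C) {x : E} (hx : x ≠ 0) :
    -‖w‖ - C / ‖x‖ ≤ f x := by
  have hx' : 0 < ‖x‖ := norm_pos_iff.2 hx
  have hinner : inner ℝ w x / ‖x‖ ≤ ‖w‖ :=
    (div_le_iff₀ hx').2 (real_inner_le_norm w x)
  linarith [(abs_le.1 (abs_add_inner_div_norm_le hf hx)).1]

lemma tendsto_apply_smul_atTop_neg_norm (hf : ∀ x, |‖x‖ * f x + inner ℝ w x| ≤ C) (hw : w ≠ 0) :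
    Tendsto (fun t : ℝ => f (t • w)) atTop (𝓝 (-‖w‖)) := by
  have hw' : 0 < ‖w‖ := norm_pos_iff.2 hw
  have hnorm : Tendsto (fun t : ℝ => ‖t • w‖) atTop atTop :=
    (tendsto_id.atTop_mul_const hw').congr' <| (eventually_ge_atTop 0).mono fun t ht => by
      simp [norm_smul, Real.norm_of_nonneg ht]
  rw [tendsto_iff_norm_sub_tendsto_zero]
  refine squeeze_zero' (g := fun t => C / ‖t • w‖) (.of_forall fun _ => norm_nonneg _) ?_
    (tendsto_const_nhds.div_atTop hnorm)
  filter_upwards [eventually_gt_atTop 0] with t ht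
  have htw : t • w ≠ 0 := smul_ne_zero ht.ne' hw
  have hdir : inner ℝ w (t • w) / ‖t • w‖ = ‖w‖ := by
    rw [real_inner_smul_right, real_inner_self_eq_norm_sq, norm_smul, Real.norm_of_nonneg ht.le]
    field_simp
  simpa [hdir, Real.norm_eq_abs] using abs_add_inner_div_norm_le hf htw

lemma liminf_comap_norm_atTop_eq_neg_norm (hf : ∀ x, |‖x‖ * f x + inner ℝ w x| ≤ C)
    (hw : w ≠ 0) : liminf f (comap norm atTop) = -‖w‖ := by
  have hray := (tendsto_apply_smul_atTop_neg_norm hf hw).comp tendsto_natCast_atTop_atTop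
  refine liminf_eq_of_tendsto_of_eventually_le (g := fun k : ℕ => (k : ℝ) • w)
    (h := fun x => -‖w‖ - C / ‖x‖) ?_ ?_ ?_ hray
  · simpa using (tendsto_const_nhds (x := -‖w‖)).sub
      (tendsto_const_nhds.div_atTop (tendsto_comap (f := (‖·‖ : E → ℝ)) (x := atTop)))
  · filter_upwards [tendsto_comap.eventually_gt_atTop 0] with x hx
    exact neg_norm_sub_div_norm_le hf (norm_pos_iff.1 hx)
  · refine tendsto_comap_iff.2 ((tendsto_natCast_atTop_atTop.atTop_mul_const
      (norm_pos_iff.2 hw)).congr fun k => ?_)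
    simp [norm_smul]

end InnerProductSpace

theorem liminf_eq_neg_norm_w (n p q : ℕ)
    (a : Fin p → EuclideanSpace ℝ (Fin n)) (b : Fin q → EuclideanSpace ℝ (Fin n))
    (α : Fin p → ℝ) (β : Fin q → ℝ)
    (hα : ∀ i, 0 < α i) (hβ : ∀ j, 0 < β j)
    (hsum : ∑ i, α i = ∑ j, β j)
    (f : EuclideanSpace ℝ (Fin n) → ℝ)
    (hf : ∀ x, f x = ∑ i, α i * ‖x - a i‖ - ∑ j, β j * ‖x - b j‖)
    (w : EuclideanSpace ℝ (Fin n))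
    (hw : w = ∑ i, α i • a i - ∑ j, β j • b j) (hwne : w ≠ 0) :
    Filter.liminf f
        (Filter.comap (fun x : EuclideanSpace ℝ (Fin n) => ‖x‖) Filter.atTop)
      = -‖w‖ ∧
    (∃ C : ℝ, ∃ R : ℝ, ∀ x, R ≤ ‖x‖ → -‖w‖ - C / ‖x‖ ≤ f x) ∧
    Filter.Tendsto (fun k : ℕ => f ((k : ℝ) • w)) Filter.atTop (nhds (-‖w‖)) := by
  have hbound : ∀ x, |‖x‖ * f x + inner ℝ w x| ≤
      (∑ i, α i * ‖a i‖ ^ 2) / 2 + (∑ j, β j * ‖b j‖ ^ 2) / 2 := fun x => by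
    rw [hf, hw]
    exact abs_norm_mul_sub_sum_mul_norm_sub_add_inner_le a b α β (fun i => (hα i).le)
      (fun j => (hβ j).le) hsum x
  refine ⟨liminf_comap_norm_atTop_eq_neg_norm hbound hwne,
    ⟨_, 1, fun x hx => neg_norm_sub_div_norm_le hbound (norm_pos_iff.1 (by linarith))⟩,
    (tendsto_apply_smul_atTop_neg_norm hbound hwne).comp tendsto_natCast_atTop_atTop⟩
end

section
/- Let p ≥ 2, points a_1,...,a_p, b ∈ R^n with {a_i − b : i = 1,...,p} linearly independent, positive weights α_1,...,α_p and β = Σ_i α_i. Then the function f(x) = Σ_i α_i ‖x − a_i‖ − β ‖x − b‖ satisfies f(x) > −‖Σ_i α_i a_i − β b‖ for all x ∈ R^n, while inf_x f(x) = −‖Σ_i α_i a_i − β b‖; hence f has no global minimizer. -/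
/-!
Put `y = x - b` and `w i = a i - b`, so that `f x = ∑ i, α i * (‖y - w i‖ - ‖y‖)` and the
claimed infimum is `-‖c‖` with `c = ∑ i, α i • w i`. Choose a unit vector `v` with `y = ‖y‖ • v`.
By Cauchy–Schwarz `‖y - w i‖ - ‖y‖ ≥ -⟪v, w i⟫` for each `i`, so `f x ≥ -⟪v, c⟫ ≥ -‖c‖`.
Equality in the `i`-th term would put `w i` on the line `ℝ ∙ v`, and two linearly independent
vectors cannot both lie there, so the bound is strict. Conversely, along the ray `y = t • u`
with `u` the unit vector of `c`, `‖t • u - w i‖ - t → -⟪u, w i⟫`, so `f` tends to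
`-⟪u, c⟫ = -‖c‖`.
-/

open Filter Topology RealInnerProductSpace Submodule

variable {E : Type*} [NormedAddCommGroup E] [InnerProductSpace ℝ E]

lemma real_inner_lt_norm_of_notMem_span_singleton {v z : E} (hv : ‖v‖ = 1)
    (hz : z ∉ ℝ ∙ v) : ⟪v, z⟫ < ‖z‖ := by
  refine (real_inner_le_norm v z).trans_eq (by rw [hv, one_mul]) |>.lt_of_ne fun h => hz ?_
  have := (inner_eq_norm_mul_iff_real (x := v) (y := z)).mp (by rw [hv, one_mul, h])
  rw [hv, one_smul] at this
  exact this ▸ smul_mem _ _ (mem_span_singleton_self v)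

lemma LinearIndependent.exists_notMem_span_singleton {ι : Type*} [Fintype ι] {w : ι → E}
    (hw : LinearIndependent ℝ w) (hι : 1 < Fintype.card ι) (v : E) :
    ∃ i, w i ∉ ℝ ∙ v := by
  by_contra! h
  have hle : span ℝ (Set.range w) ≤ ℝ ∙ v := span_le.mpr (Set.range_subset_iff.mpr h)
  have := (finrank_span_eq_card hw).symm.trans_le
    ((finrank_mono hle).trans (finrank_span_le_card ({v} : Set E)))
  simp only [Set.toFinset_singleton, Finset.card_singleton] at this
  omega

lemma exists_norm_eq_one_and_eq_norm_smul [Nontrivial E] (y : E) :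
    ∃ v : E, ‖v‖ = 1 ∧ y = ‖y‖ • v := by
  rcases eq_or_ne y 0 with rfl | hy
  · obtain ⟨v, hv⟩ := exists_norm_eq E zero_le_one
    exact ⟨v, hv, by simp⟩
  · have hy' : ‖y‖ ≠ 0 := norm_ne_zero_iff.mpr hy
    refine ⟨‖y‖⁻¹ • y, ?_, ?_⟩
    · rw [norm_smul, norm_inv, norm_norm, inv_mul_cancel₀ hy']
    · rw [smul_smul, mul_inv_cancel₀ hy', one_smul]

section UnitDirection

variable {v y : E}

lemma real_inner_eq_norm_of_eq_norm_smul (hv : ‖v‖ = 1) (hy : y = ‖y‖ • v) : ⟪v, y⟫ = ‖y‖ := by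
  nth_rewrite 1 [hy]
  rw [real_inner_smul_right, real_inner_self_eq_norm_sq, hv, one_pow, mul_one]

lemma neg_real_inner_le_norm_sub_sub_norm (hv : ‖v‖ = 1) (hy : y = ‖y‖ • v) (w : E) :
    -⟪v, w⟫ ≤ ‖y - w‖ - ‖y‖ := by
  have := real_inner_le_norm v (y - w)
  rw [inner_sub_right, real_inner_eq_norm_of_eq_norm_smul hv hy, hv, one_mul] at this
  linarith

lemma neg_real_inner_lt_norm_sub_sub_norm (hv : ‖v‖ = 1) (hy : y = ‖y‖ • v) {w : E}
    (hw : w ∉ ℝ ∙ v) : -⟪v, w⟫ < ‖y - w‖ - ‖y‖ := by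
  have hyv : y ∈ ℝ ∙ v := hy ▸ smul_mem _ _ (mem_span_singleton_self v)
  have := real_inner_lt_norm_of_notMem_span_singleton hv fun h =>
    hw ((sub_mem_iff_right _ hyv).mp h)
  rw [inner_sub_right, real_inner_eq_norm_of_eq_norm_smul hv hy] at this
  linarith

end UnitDirection

lemma norm_smul_sub_le {u : E} (hu : ‖u‖ = 1) (w : E) {t : ℝ} (ht : 0 < t) :
    ‖t • u - w‖ ≤ t - ⟪u, w⟫ + ‖w‖ ^ 2 / (2 * t) := by
  have hcs : ⟪u, w⟫ ≤ ‖w‖ := by simpa [hu] using real_inner_le_norm u w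
  have hsq : (t - ⟪u, w⟫ + ‖w‖ ^ 2 / (2 * t)) ^ 2
      = ‖t • u - w‖ ^ 2 + (⟪u, w⟫ - ‖w‖ ^ 2 / (2 * t)) ^ 2 := by
    rw [norm_sub_sq_real, norm_smul, real_inner_smul_left, hu, Real.norm_of_nonneg ht.le]
    field_simp
    ring
  have hpos : 0 ≤ t - ⟪u, w⟫ + ‖w‖ ^ 2 / (2 * t) :=
    calc 0 ≤ (t ^ 2 + (t - ‖w‖) ^ 2) / (2 * t) := by positivity
      _ = t - ‖w‖ + ‖w‖ ^ 2 / (2 * t) := by field_simp; ring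
      _ ≤ _ := by linarith
  exact (sq_le_sq₀ (norm_nonneg _) hpos).mp (hsq ▸ le_add_of_nonneg_right (sq_nonneg _))

lemma tendsto_norm_smul_sub_sub_norm_smul {u : E} (hu : ‖u‖ = 1) (w : E) :
    Tendsto (fun t : ℝ => ‖t • u - w‖ - ‖t • u‖) atTop (𝓝 (-⟪u, w⟫)) := by
  have hupper : Tendsto (fun t : ℝ => -⟪u, w⟫ + ‖w‖ ^ 2 / 2 * t⁻¹) atTop (𝓝 (-⟪u, w⟫)) := by
    simpa using tendsto_inv_atTop_zero.const_mul (‖w‖ ^ 2 / 2) |>.const_add (-⟪u, w⟫)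
  refine tendsto_of_tendsto_of_tendsto_of_le_of_le' tendsto_const_nhds hupper ?_ ?_
  · filter_upwards [eventually_ge_atTop 0] with t ht
    have := real_inner_le_norm u (t • u - w)
    rw [inner_sub_right, real_inner_smul_right, real_inner_self_eq_norm_sq, hu] at this
    rw [norm_smul, hu, Real.norm_of_nonneg ht]
    linarith
  · filter_upwards [eventually_gt_atTop 0] with t ht
    have := norm_smul_sub_le hu w ht
    rw [norm_smul, hu, Real.norm_of_nonneg ht.le]
    field_simp at this ⊢
    linarith

lemma neg_real_inner_sum_smul {ι : Type*} [Fintype ι] (v : E) (α : ι → ℝ) (w : ι → E) :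
    -⟪v, ∑ i, α i • w i⟫ = ∑ i, α i * -⟪v, w i⟫ := by
  simp only [inner_sum, real_inner_smul_right, mul_neg, Finset.sum_neg_distrib]

lemma neg_norm_le_neg_real_inner {v : E} (hv : ‖v‖ = 1) (c : E) : -‖c‖ ≤ -⟪v, c⟫ :=
  neg_le_neg (by simpa [hv] using real_inner_le_norm v c)

variable {ι : Type*} [Fintype ι] {α : ι → ℝ} {w : ι → E}

theorem isGLB_range_sum_mul_norm_sub_sub_norm [Nontrivial E] (hα : ∀ i, 0 ≤ α i) :
    IsGLB (Set.range fun y => ∑ i, α i * (‖y - w i‖ - ‖y‖)) (-‖∑ i, α i • w i‖) := by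
  constructor
  · rintro _ ⟨y, rfl⟩
    obtain ⟨v, hv, hy⟩ := exists_norm_eq_one_and_eq_norm_smul y
    calc -‖∑ i, α i • w i‖ ≤ -⟪v, ∑ i, α i • w i⟫ := neg_norm_le_neg_real_inner hv _
      _ = ∑ i, α i * -⟪v, w i⟫ := neg_real_inner_sum_smul v α w
      _ ≤ _ := Finset.sum_le_sum fun i _ =>
        mul_le_mul_of_nonneg_left (neg_real_inner_le_norm_sub_sub_norm hv hy (w i)) (hα i)
  · intro m hm
    obtain ⟨u, hu, hc⟩ := exists_norm_eq_one_and_eq_norm_smul (∑ i, α i • w i)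
    have hlim : Tendsto (fun t : ℝ => ∑ i, α i * (‖t • u - w i‖ - ‖t • u‖)) atTop
        (𝓝 (-‖∑ i, α i • w i‖)) := by
      rw [← real_inner_eq_norm_of_eq_norm_smul hu hc, neg_real_inner_sum_smul]
      exact tendsto_finsetSum _ fun i _ =>
        (tendsto_norm_smul_sub_sub_norm_smul hu (w i)).const_mul (α i)
    exact ge_of_tendsto' hlim fun t => hm ⟨t • u, rfl⟩

theorem neg_norm_sum_smul_lt_sum_mul_norm_sub_sub_norm (hα : ∀ i, 0 < α i)
    (hw : LinearIndependent ℝ w) (hι : 1 < Fintype.card ι) (y : E) :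
    -‖∑ i, α i • w i‖ < ∑ i, α i * (‖y - w i‖ - ‖y‖) := by
  have : Nonempty ι := Fintype.card_pos_iff.mp (by omega)
  have : Nontrivial E := nontrivial_of_ne _ _ (hw.ne_zero (Classical.arbitrary ι))
  obtain ⟨v, hv, hy⟩ := exists_norm_eq_one_and_eq_norm_smul y
  obtain ⟨j, hj⟩ := hw.exists_notMem_span_singleton hι v
  calc -‖∑ i, α i • w i‖ ≤ -⟪v, ∑ i, α i • w i⟫ := neg_norm_le_neg_real_inner hv _
    _ = ∑ i, α i * -⟪v, w i⟫ := neg_real_inner_sum_smul v α w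
    _ < _ := Finset.sum_lt_sum (fun i _ =>
        mul_le_mul_of_nonneg_left (neg_real_inner_le_norm_sub_sub_norm hv hy (w i)) (hα i).le)
      ⟨j, Finset.mem_univ j,
        mul_lt_mul_of_pos_left (neg_real_inner_lt_norm_sub_sub_norm hv hy hj) (hα j)⟩

theorem no_global_minimizer (n p : ℕ) (hp : 2 ≤ p)
    (a : Fin p → EuclideanSpace ℝ (Fin n)) (b : EuclideanSpace ℝ (Fin n))
    (hli : LinearIndependent ℝ (fun i : Fin p => a i - b))
    (α : Fin p → ℝ) (hα : ∀ i, 0 < α i)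
    (β : ℝ) (hβ : β = ∑ i, α i)
    (f : EuclideanSpace ℝ (Fin n) → ℝ)
    (hf : ∀ x, f x = ∑ i, α i * ‖x - a i‖ - β * ‖x - b‖) :
    (∀ x, -‖∑ i, α i • a i - β • b‖ < f x) ∧
    IsGLB (Set.range f) (-‖∑ i, α i • a i - β • b‖) ∧
    ¬∃ xb, ∀ x, f xb ≤ f x := by
  have hc : ∑ i, α i • a i - β • b = ∑ i, α i • (a i - b) := by
    simp only [hβ, smul_sub, Finset.sum_sub_distrib, Finset.sum_smul]
  have hf' : f = (fun y => ∑ i, α i * (‖y - (a i - b)‖ - ‖y‖)) ∘ (· - b) := by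
    ext x
    simp only [hf, hβ, Function.comp_apply, sub_sub_sub_cancel_right, mul_sub,
      Finset.sum_sub_distrib, Finset.sum_mul]
  have hp' : 1 < Fintype.card (Fin p) := by rw [Fintype.card_fin]; omega
  have hlower : ∀ x, -‖∑ i, α i • a i - β • b‖ < f x := fun x => by
    rw [hc, hf']
    exact neg_norm_sum_smul_lt_sum_mul_norm_sub_sub_norm hα hli hp' (x - b)
  have : Nontrivial (EuclideanSpace ℝ (Fin n)) :=
    nontrivial_of_ne _ _ (hli.ne_zero ⟨0, by omega⟩)
  have hglb : IsGLB (Set.range f) (-‖∑ i, α i • a i - β • b‖) := by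
    rw [hc, hf', Function.Surjective.range_comp fun y => ⟨y + b, add_sub_cancel_right y b⟩]
    exact isGLB_range_sum_mul_norm_sub_sub_norm fun i => (hα i).le
  exact ⟨hlower, hglb, fun ⟨xb, hxb⟩ =>
    (hlower xb).not_ge (hglb.2 (Set.forall_mem_range.mpr hxb))⟩
end

section
/- Let Ω, Θ be nonempty closed convex sets in R^n and α ≥ β > 0, with f(x) = α d(x; Ω) − β d(x; Θ). Then no point of Θ \ Ω is a local minimizer of f. -/
/-!
Let `w` be a point of `Ω` nearest to `x̄ ∉ Ω`. Moving from `x̄` a fraction `t` of the way towards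
`w` brings `d(·; Ω)` down to at most `(1 - t) d(x̄; Ω)`, so `d(·; Ω)` has no local minimum off `Ω`.
For `x̄ ∈ Θ` we have `f ≤ α d(·; Ω)` with equality at `x̄`, so a local minimum of `f` at `x̄` would
be one of `d(·; Ω)` as well.
-/

open Metric Filter Topology AffineMap

section InfDist

variable {E : Type*} [SeminormedAddCommGroup E] [NormedSpace ℝ E]

theorem infDist_lineMap_le {s : Set E} {x w : E} (hw : w ∈ s) (t : ℝ) :
    infDist (lineMap x w t) s ≤ ‖1 - t‖ * dist x w :=
  (infDist_le_dist_of_mem hw).trans_eq (dist_lineMap_right x w t)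

theorem not_isLocalMin_infDist [ProperSpace E] {s : Set E} (hs : IsClosed s) (hne : s.Nonempty)
    {x : E} (hx : x ∉ s) : ¬ IsLocalMin (infDist · s) x := by
  intro hmin
  obtain ⟨w, hw, hxw⟩ := hs.exists_infDist_eq_dist hne x
  have hpos : 0 < dist x w := hxw ▸ (hs.notMem_iff_infDist_pos hne).mp hx
  have hsegment : Tendsto (lineMap x w : ℝ → E) (𝓝[>] 0) (𝓝 x) :=
    (lineMap_continuous.tendsto' 0 x (lineMap_apply_zero x w)).mono_left nhdsWithin_le_nhds
  obtain ⟨t, hle, ht0, ht1⟩ :=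
    ((hsegment.eventually hmin).and (Ioo_mem_nhdsGT one_pos)).exists
  have hlt : infDist (lineMap x w t) s < infDist x s :=
    calc infDist (lineMap x w t) s ≤ ‖1 - t‖ * dist x w := infDist_lineMap_le hw t
      _ = (1 - t) * dist x w := by rw [Real.norm_of_nonneg (by linarith)]
      _ < infDist x s := by rw [hxw]; nlinarith
  exact hle.not_gt hlt

end InfDist

theorem no_local_min_in_theta_minus_omega_general (n : ℕ)
    (Ω Θ : Set (EuclideanSpace ℝ (Fin n)))
    (hΩ : Ω.Nonempty) (hΩc : IsClosed Ω)
    (α β : ℝ) (hβ : 0 < β) (hαβ : β ≤ α)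
    (f : EuclideanSpace ℝ (Fin n) → ℝ)
    (hf : ∀ x, f x = α * Metric.infDist x Ω - β * Metric.infDist x Θ) :
    ∀ xb ∈ Θ \ Ω, ¬ IsLocalMin f xb := by
  rintro xb ⟨hxΘ, hxΩ⟩ hmin
  refine not_isLocalMin_infDist hΩc hΩ hxΩ ?_
  have hα : 0 < α := hβ.trans_le hαβ
  filter_upwards [hmin] with x hx
  rw [hf, hf, infDist_zero_of_mem hxΘ] at hx
  have hΘx : 0 ≤ β * infDist x Θ := mul_nonneg hβ.le infDist_nonneg
  exact le_of_mul_le_mul_left (by linarith) hα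

theorem no_local_min_in_theta_minus_omega (n : ℕ)
    (Ω Θ : Set (EuclideanSpace ℝ (Fin n)))
    (hΩ : Ω.Nonempty) (hΩc : IsClosed Ω) (hΩconv : Convex ℝ Ω)
    (hΘ : Θ.Nonempty) (hΘc : IsClosed Θ) (hΘconv : Convex ℝ Θ)
    (α β : ℝ) (hβ : 0 < β) (hαβ : β ≤ α)
    (f : EuclideanSpace ℝ (Fin n) → ℝ)
    (hf : ∀ x, f x = α * Metric.infDist x Ω - β * Metric.infDist x Θ) :
    ∀ xb ∈ Θ \ Ω, ¬ IsLocalMin f xb :=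
  no_local_min_in_theta_minus_omega_general n Ω Θ hΩ hΩc α β hβ hαβ f hf
end

section
/- Let Ω, Θ be nonempty closed convex sets in R^n and α > β > 0, with f(x) = α d(x; Ω) − β d(x; Θ). Then every local minimizer of f belongs to Ω. -/
/-! Suppose a local minimizer `x` of `f = α d(·; Ω) - β d(·; Θ)` lies outside `Ω`, and let `p ∈ Ω`
be a nearest point. Moving from `x` a fraction `t` of the way towards `p` lowers `d(·; Ω)` by exactly
`t d(x; Ω)`, while the 1-Lipschitz function `d(·; Θ)` drops by at most that much; since `α > β`, the
value of `f` drops by at least `(α - β) t d(x; Ω) > 0`, however small `t` is. -/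

open Metric AffineMap Filter Topology Set

section LineMap

variable {V P : Type*} [SeminormedAddCommGroup V] [NormedSpace ℝ V] [PseudoMetricSpace P]
  [NormedAddTorsor V P]

theorem infDist_lineMap_le_of_mem {s : Set P} {x p : P} (hp : p ∈ s) {t : ℝ} (ht : t ≤ 1) :
    infDist (lineMap x p t) s ≤ (1 - t) * dist x p :=
  calc infDist (lineMap x p t) s ≤ dist (lineMap x p t) p := infDist_le_dist_of_mem hp
    _ = (1 - t) * dist x p := by rw [dist_lineMap_right, Real.norm_of_nonneg (by linarith)]

theorem infDist_le_infDist_lineMap_add (s : Set P) (x p : P) {t : ℝ} (ht : 0 ≤ t) :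
    infDist x s ≤ infDist (lineMap x p t) s + t * dist x p :=
  calc infDist x s ≤ infDist (lineMap x p t) s + dist x (lineMap x p t) :=
        infDist_le_infDist_add_dist
    _ = infDist (lineMap x p t) s + t * dist x p := by
        rw [dist_comm, dist_lineMap_left, Real.norm_of_nonneg ht]

theorem sub_infDist_lineMap_lt {Ω Θ : Set P} {x p : P} (hp : p ∈ Ω)
    (hxp : infDist x Ω = dist x p) (hx : 0 < infDist x Ω) {α β : ℝ} (hβ : 0 ≤ β) (hαβ : β < α)
    {t : ℝ} (ht : t ∈ Ioc (0 : ℝ) 1) :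
    α * infDist (lineMap x p t) Ω - β * infDist (lineMap x p t) Θ <
      α * infDist x Ω - β * infDist x Θ := by
  have hΩ := infDist_lineMap_le_of_mem (x := x) hp ht.2
  have hΘ := infDist_le_infDist_lineMap_add Θ x p ht.1.le
  rw [← hxp] at hΩ hΘ
  have hgain : 0 < (α - β) * (t * infDist x Ω) := mul_pos (sub_pos.2 hαβ) (mul_pos ht.1 hx)
  linarith [mul_le_mul_of_nonneg_left hΩ (hβ.trans hαβ.le), mul_le_mul_of_nonneg_left hΘ hβ]

theorem IsLocalMin.exists_le_lineMap {γ : Type*} [Preorder γ] {f : P → γ} {x : P}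
    (h : IsLocalMin f x) (p : P) : ∃ t ∈ Ioc (0 : ℝ) 1, f x ≤ f (lineMap x p t) := by
  have hlim : Tendsto (fun t : ℝ ↦ lineMap x p t) (𝓝[>] 0) (𝓝 x) := by
    simpa using (lineMap_continuous (p := x) (q := p)).tendsto' 0 x (by simp) |>.mono_left
      nhdsWithin_le_nhds
  exact ((hlim.eventually h).and (Ioc_mem_nhdsGT one_pos)).exists.imp fun _ h ↦ ⟨h.2, h.1⟩

end LineMap

theorem local_min_belongs_to_omega_general (n : ℕ)
    (Ω Θ : Set (EuclideanSpace ℝ (Fin n)))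
    (hΩ : Ω.Nonempty) (hΩc : IsClosed Ω)
    (α β : ℝ) (hβ : 0 < β) (hαβ : β < α)
    (f : EuclideanSpace ℝ (Fin n) → ℝ)
    (hf : ∀ x, f x = α * Metric.infDist x Ω - β * Metric.infDist x Θ) :
    ∀ xb, IsLocalMin f xb → xb ∈ Ω := by
  intro xb hmin
  by_contra hxb
  obtain ⟨p, hp, hxp⟩ := hΩc.exists_infDist_eq_dist hΩ xb
  have hdist : 0 < infDist xb Ω := (hΩc.notMem_iff_infDist_pos hΩ).1 hxb
  obtain ⟨t, ht, hle⟩ := hmin.exists_le_lineMap p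
  have hlt := sub_infDist_lineMap_lt (Θ := Θ) hp hxp hdist hβ.le hαβ ht
  rw [hf, hf] at hle
  exact hle.not_gt hlt

theorem local_min_belongs_to_omega (n : ℕ)
    (Ω Θ : Set (EuclideanSpace ℝ (Fin n)))
    (hΩ : Ω.Nonempty) (hΩc : IsClosed Ω) (hΩconv : Convex ℝ Ω)
    (hΘ : Θ.Nonempty) (hΘc : IsClosed Θ) (hΘconv : Convex ℝ Θ)
    (α β : ℝ) (hβ : 0 < β) (hαβ : β < α)
    (f : EuclideanSpace ℝ (Fin n) → ℝ)
    (hf : ∀ x, f x = α * Metric.infDist x Ω - β * Metric.infDist x Θ) :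
    ∀ xb, IsLocalMin f xb → xb ∈ Ω :=
  local_min_belongs_to_omega_general n Ω Θ hΩ hΩc α β hβ hαβ f hf
end

section
/- Let Ω, Θ be nonempty closed convex sets in R^n and α > β > 0. Then x̄ minimizes f(x) = α d(x; Ω) − β d(x; Θ) over R^n if and only if x̄ ∈ Ω and x̄ maximizes d(·; Θ) over Ω. In particular the solution set of the minimization problem is independent of the specific values of α and β as long as α > β > 0. -/
/-!
Projecting a point `x` onto `Ω` lowers `α d(·; Ω)` by `α d(x; Ω)` and, since `d(·; Θ)` is
`1`-Lipschitz, raises `-β d(·; Θ)` by at most `β d(x; Ω)`. So when `α > β` every point outside `Ω`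
is strictly beaten by its projection, and on `Ω` the objective is just `-β d(·; Θ)`.
-/

open Metric Set

section

variable {E : Type*} [PseudoMetricSpace E] (α β : ℝ) (s t : Set E)

noncomputable def penalizedDist (x : E) : ℝ := α * infDist x s - β * infDist x t

variable {α β s t}

lemma penalizedDist_of_mem {x : E} (hx : x ∈ s) :
    penalizedDist α β s t x = -(β * infDist x t) := by
  simp [penalizedDist, infDist_zero_of_mem hx]

lemma add_penalizedDist_le_of_dist_eq_infDist (hβ : 0 ≤ β) {x p : E} (hp : p ∈ s)
    (hxp : dist x p = infDist x s) :
    (α - β) * infDist x s + penalizedDist α β s t p ≤ penalizedDist α β s t x := by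
  have hlip : infDist x t ≤ infDist p t + dist x p := infDist_le_infDist_add_dist
  rw [penalizedDist_of_mem hp, penalizedDist, ← hxp]
  linarith [mul_le_mul_of_nonneg_left hlip hβ]

variable [ProperSpace E]

lemma exists_mem_add_penalizedDist_le (hβ : 0 ≤ β) (hs : s.Nonempty) (hsc : IsClosed s) (x : E) :
    ∃ p ∈ s, (α - β) * infDist x s + penalizedDist α β s t p ≤ penalizedDist α β s t x := by
  obtain ⟨p, hp, hxp⟩ := hsc.exists_infDist_eq_dist hs x
  exact ⟨p, hp, add_penalizedDist_le_of_dist_eq_infDist hβ hp hxp.symm⟩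

theorem isMinOn_penalizedDist_iff (hβ : 0 < β) (hαβ : β < α) (hs : s.Nonempty)
    (hsc : IsClosed s) {xb : E} :
    IsMinOn (penalizedDist α β s t) univ xb ↔ xb ∈ s ∧ IsMaxOn (infDist · t) s xb := by
  rw [isMinOn_univ_iff, isMaxOn_iff]
  constructor
  · intro hmin
    obtain ⟨p, hp, hproj⟩ := exists_mem_add_penalizedDist_le (t := t) hβ.le hs hsc xb
    have hxb : xb ∈ s := by
      have : (α - β) * infDist xb s ≤ 0 := by linarith [hmin p]
      have hpos : 0 < α - β := sub_pos.2 hαβ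
      exact (hsc.mem_iff_infDist_zero hs).2 <|
        le_antisymm (nonpos_of_mul_nonpos_right this hpos) infDist_nonneg
    refine ⟨hxb, fun x hx => ?_⟩
    have := hmin x
    rw [penalizedDist_of_mem hxb, penalizedDist_of_mem hx, neg_le_neg_iff] at this
    exact le_of_mul_le_mul_left this hβ
  · rintro ⟨hxb, hmax⟩ x
    obtain ⟨p, hp, hproj⟩ := exists_mem_add_penalizedDist_le (t := t) hβ.le hs hsc x
    have hgap : 0 ≤ (α - β) * infDist x s := mul_nonneg (sub_pos.2 hαβ).le infDist_nonneg
    have hfar : penalizedDist α β s t xb ≤ penalizedDist α β s t p := by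
      rw [penalizedDist_of_mem hxb, penalizedDist_of_mem hp, neg_le_neg_iff]
      exact mul_le_mul_of_nonneg_left (hmax p hp) hβ.le
    linarith

end

theorem global_min_iff_max_dist_general (n : ℕ)
    (Ω Θ : Set (EuclideanSpace ℝ (Fin n)))
    (hΩ : Ω.Nonempty) (hΩc : IsClosed Ω)
    (α β : ℝ) (hβ : 0 < β) (hαβ : β < α)
    (f : EuclideanSpace ℝ (Fin n) → ℝ)
    (hf : ∀ x, f x = α * Metric.infDist x Ω - β * Metric.infDist x Θ) :
    ∀ xb, (∀ x, f xb ≤ f x) ↔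
      (xb ∈ Ω ∧ ∀ x ∈ Ω, Metric.infDist x Θ ≤ Metric.infDist xb Θ) := by
  obtain rfl : f = penalizedDist α β Ω Θ := funext hf
  intro xb
  exact isMinOn_univ_iff.symm.trans (isMinOn_penalizedDist_iff hβ hαβ hΩ hΩc)

theorem global_min_iff_max_dist (n : ℕ)
    (Ω Θ : Set (EuclideanSpace ℝ (Fin n)))
    (hΩ : Ω.Nonempty) (hΩc : IsClosed Ω) (hΩconv : Convex ℝ Ω)
    (hΘ : Θ.Nonempty) (hΘc : IsClosed Θ) (hΘconv : Convex ℝ Θ)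
    (α β : ℝ) (hβ : 0 < β) (hαβ : β < α)
    (f : EuclideanSpace ℝ (Fin n) → ℝ)
    (hf : ∀ x, f x = α * Metric.infDist x Ω - β * Metric.infDist x Θ) :
    ∀ xb, (∀ x, f xb ≤ f x) ↔
      (xb ∈ Ω ∧ ∀ x ∈ Ω, Metric.infDist x Θ ≤ Metric.infDist xb Θ) :=
  global_min_iff_max_dist_general n Ω Θ hΩ hΩc α β hβ hαβ f hf
end

section
/- Let Ω, Θ be nonempty closed convex sets in R^n and f(x) = d(x; Ω) − d(x; Θ). If ū ∈ Ω maximizes d(·; Θ) over Ω, then ū is a global minimizer of f over R^n. Conversely, if f has a global minimizer, then d(·; Θ) attains its maximum over Ω. -/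
/-!
Every `x` lies within `d(x, Ω)` of some point `p ∈ Ω`, and `d(·, Θ)` is 1-Lipschitz, so
`d(x, Θ) - d(x, Ω) ≤ d(p, Θ) ≤ sup_Ω d(·, Θ)`, while on `Ω` the function `f = d(·, Ω) - d(·, Θ)`
equals `-d(·, Θ)`. Hence `inf f = -sup_Ω d(·, Θ)`, and a maximizer on `Ω` minimizes `f`.
Conversely, a nearest point of `Ω` to a minimizer of `f` attains `sup_Ω d(·, Θ)`.
-/

open Metric

section

variable {α : Type*} [PseudoMetricSpace α] {s t : Set α}

theorem infDist_sub_infDist_le_of_forall_le {c : ℝ} (hs : s.Nonempty)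
    (h : ∀ p ∈ s, infDist p t ≤ c) (x : α) : infDist x t - infDist x s ≤ c := by
  suffices infDist x t - c ≤ infDist x s by linarith
  refine (le_infDist hs).2 fun p hp => ?_
  linarith [infDist_le_infDist_add_dist (x := x) (y := p) (s := t), h p hp]

theorem infDist_sub_infDist_le_of_isMaxOn {p : α} (hp : p ∈ s)
    (hmax : IsMaxOn (infDist · t) s p) (x : α) :
    infDist p s - infDist p t ≤ infDist x s - infDist x t := by
  have := infDist_sub_infDist_le_of_forall_le ⟨p, hp⟩ (isMaxOn_iff.1 hmax) x
  rw [infDist_zero_of_mem hp]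
  linarith

theorem exists_isMaxOn_infDist_of_forall_le [ProperSpace α] (hs : IsClosed s)
    (hne : s.Nonempty) {x : α}
    (hmin : ∀ y, infDist x s - infDist x t ≤ infDist y s - infDist y t) :
    ∃ p ∈ s, IsMaxOn (infDist · t) s p := by
  obtain ⟨p, hp, hxp⟩ := hs.exists_infDist_eq_dist hne x
  refine ⟨p, hp, isMaxOn_iff.2 fun q hq => ?_⟩
  have hxq := hmin q
  rw [infDist_zero_of_mem hq, hxp] at hxq
  linarith [infDist_le_infDist_add_dist (x := x) (y := p) (s := t)]

end

theorem equal_weights_min_max_relation_general (n : ℕ)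
    (Ω Θ : Set (EuclideanSpace ℝ (Fin n)))
    (hΩ : Ω.Nonempty) (hΩc : IsClosed Ω)
    (f : EuclideanSpace ℝ (Fin n) → ℝ)
    (hf : ∀ x, f x = Metric.infDist x Ω - Metric.infDist x Θ) :
    (∀ ub ∈ Ω, (∀ x ∈ Ω, Metric.infDist x Θ ≤ Metric.infDist ub Θ) →
      ∀ x, f ub ≤ f x) ∧
    ((∃ xb, ∀ x, f xb ≤ f x) →
      ∃ ub ∈ Ω, ∀ x ∈ Ω, Metric.infDist x Θ ≤ Metric.infDist ub Θ) := by
  obtain rfl : f = fun x => infDist x Ω - infDist x Θ := funext hf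
  refine ⟨fun ub hub hmax => infDist_sub_infDist_le_of_isMaxOn hub (isMaxOn_iff.2 hmax), ?_⟩
  rintro ⟨xb, hxb⟩
  obtain ⟨ub, hub, hmax⟩ := exists_isMaxOn_infDist_of_forall_le hΩc hΩ hxb
  exact ⟨ub, hub, isMaxOn_iff.1 hmax⟩

theorem equal_weights_min_max_relation (n : ℕ)
    (Ω Θ : Set (EuclideanSpace ℝ (Fin n)))
    (hΩ : Ω.Nonempty) (hΩc : IsClosed Ω) (hΩconv : Convex ℝ Ω)
    (hΘ : Θ.Nonempty) (hΘc : IsClosed Θ) (hΘconv : Convex ℝ Θ)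
    (f : EuclideanSpace ℝ (Fin n) → ℝ)
    (hf : ∀ x, f x = Metric.infDist x Ω - Metric.infDist x Θ) :
    (∀ ub ∈ Ω, (∀ x ∈ Ω, Metric.infDist x Θ ≤ Metric.infDist ub Θ) →
      ∀ x, f ub ≤ f x) ∧
    ((∃ xb, ∀ x, f xb ≤ f x) →
      ∃ ub ∈ Ω, ∀ x ∈ Ω, Metric.infDist x Θ ≤ Metric.infDist ub Θ) :=
  equal_weights_min_max_relation_general n Ω Θ hΩ hΩc f hf
end

section
/- Let Ω, Θ be nonempty closed convex sets in R^n with Ω \ Θ ≠ ∅, and f(x) = d(x; Ω) − d(x; Θ). Denote by S_1 the set of global minimizers of f over R^n and by S_2 the set of maximizers of d(·; Θ) over Ω. Then S_1 = { ū + t(ū − P(ū; Θ)) : ū ∈ S_2, t ≥ 0 }. -/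
open Metric

theorem proj_mem_and_dist_eq {n : ℕ} {Q : Set (EuclideanSpace ℝ (Fin n))} (hQ : Q.Nonempty)
    (hQc : IsClosed Q) (x : EuclideanSpace ℝ (Fin n)) :
    proj n Q x ∈ Q ∧ dist x (proj n Q x) = infDist x Q := by
  obtain ⟨y, hy, hxy⟩ := hQc.exists_infDist_eq_dist hQ x
  have h : ∃ p ∈ Q, dist x p = infDist x Q := ⟨y, hy, hxy.symm⟩
  rw [proj, dif_pos h]
  exact h.choose_spec

theorem neg_infDist_le_infDist_sub_infDist {α : Type*} [PseudoMetricSpace α] {s t : Set α}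
    {y q : α} (hyq : infDist y s = dist y q) :
    -infDist q t ≤ infDist y s - infDist y t := by
  linarith [infDist_le_infDist_add_dist (x := y) (y := q) (s := t)]

theorem Convex.one_add_mul_infDist_le_infDist_add_smul_sub {E : Type*}
    [NormedAddCommGroup E] [NormedSpace ℝ E] {s : Set E} (hs : Convex ℝ s) {u p : E}
    (hp : p ∈ s) {t : ℝ} (ht : 0 ≤ t) :
    (1 + t) * infDist u s ≤ infDist (u + t • (u - p)) s := by
  refine (le_infDist ⟨p, hp⟩).2 fun θ hθ => ?_
  have ht' : 0 < 1 + t := by linarith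
  -- the homothety with centre `p` and ratio `1 / (1 + t)` maps `u + t • (u - p)` to `u`
  -- and `θ` to `z`
  set z := (1 + t)⁻¹ • θ + (t / (1 + t)) • p
  have hz : z ∈ s := hs hθ hp (by positivity) (by positivity) (by field_simp)
  have hscale : (1 + t) • (u - z) = u + t • (u - p) - θ := by
    simp only [z, smul_sub, smul_add, smul_smul]
    rw [mul_inv_cancel₀ ht'.ne', mul_div_cancel₀ _ ht'.ne']
    module
  calc (1 + t) * infDist u s ≤ (1 + t) * dist u z :=
        mul_le_mul_of_nonneg_left (infDist_le_dist_of_mem hz) ht'.le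
    _ = dist (u + t • (u - p)) θ := by
        rw [dist_eq_norm, dist_eq_norm, ← hscale, norm_smul, Real.norm_of_nonneg ht'.le]

theorem exists_nonneg_eq_add_smul_sub_of_dist_add_dist_eq {E : Type*}
    [NormedAddCommGroup E] [NormedSpace ℝ E] [StrictConvexSpace ℝ E] {x q p : E}
    (h : dist x q + dist q p = dist x p) (hqp : q ≠ p) :
    ∃ t : ℝ, 0 ≤ t ∧ x = q + t • (q - p) := by
  have hray : SameRay ℝ (x - q) (q - p) := by
    rw [sameRay_iff_norm_add, ← dist_eq_norm, ← dist_eq_norm, sub_add_sub_cancel,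
      ← dist_eq_norm, h]
  obtain ⟨t, ht, hxq⟩ := hray.exists_nonneg_right (sub_ne_zero.2 hqp)
  exact ⟨t, ht, by rw [← hxq]; abel⟩

theorem solution_set_representation_general (n : ℕ)
    (Ω Θ : Set (EuclideanSpace ℝ (Fin n)))
    (hΩ : Ω.Nonempty) (hΩc : IsClosed Ω)
    (hΘ : Θ.Nonempty) (hΘc : IsClosed Θ) (hΘconv : Convex ℝ Θ)
    (hdiff : (Ω \ Θ).Nonempty)
    (f : EuclideanSpace ℝ (Fin n) → ℝ)
    (hf : ∀ x, f x = Metric.infDist x Ω - Metric.infDist x Θ) :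
    {x | ∀ y, f x ≤ f y} =
      {x | ∃ ub, (ub ∈ Ω ∧ ∀ u ∈ Ω, Metric.infDist u Θ ≤ Metric.infDist ub Θ) ∧
        ∃ t : ℝ, 0 ≤ t ∧ x = ub + t • (ub - proj n Θ ub)} := by
  have hf_mem : ∀ u ∈ Ω, f u = -infDist u Θ := fun u hu => by
    rw [hf, infDist_zero_of_mem hu, zero_sub]
  have hf_ge : ∀ y q, infDist y Ω = dist y q → -infDist q Θ ≤ f y := fun y q hyq =>
    (hf y).symm ▸ neg_infDist_le_infDist_sub_infDist hyq
  ext x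
  constructor
  · intro hx
    obtain ⟨q, hq, hxq⟩ := hΩc.exists_infDist_eq_dist hΩ x
    obtain ⟨hp, hqp⟩ := proj_mem_and_dist_eq hΘ hΘc q
    have hmax : ∀ u ∈ Ω, infDist u Θ ≤ infDist q Θ := fun u hu => by
      linarith [hx u, hf_mem u hu, hf_ge x q hxq]
    have hq_pos : 0 < infDist q Θ := by
      obtain ⟨w, hw, hwΘ⟩ := hdiff
      exact ((hΘc.notMem_iff_infDist_pos hΘ).1 hwΘ).trans_le (hmax w hw)
    have hsplit : infDist x Θ = dist x q + dist q (proj n Θ q) := by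
      linarith [hx q, hf_mem q hq, hf x, hf_ge x q hxq]
    have hcollinear : dist x q + dist q (proj n Θ q) = dist x (proj n Θ q) :=
      le_antisymm (hsplit ▸ infDist_le_dist_of_mem hp) (dist_triangle _ _ _)
    refine ⟨q, ⟨hq, hmax⟩, exists_nonneg_eq_add_smul_sub_of_dist_add_dist_eq hcollinear ?_⟩
    intro hq_eq
    rw [← hq_eq, dist_self] at hqp
    exact hq_pos.ne hqp
  · rintro ⟨u, ⟨hu, hmax⟩, t, ht, rfl⟩ y
    obtain ⟨hp, hup⟩ := proj_mem_and_dist_eq hΘ hΘc u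
    obtain ⟨q, hq, hyq⟩ := hΩc.exists_infDist_eq_dist hΩ y
    have hdist_Ω : infDist (u + t • (u - proj n Θ u)) Ω ≤ t * infDist u Θ :=
      calc _ ≤ dist (u + t • (u - proj n Θ u)) u := infDist_le_dist_of_mem hu
        _ = t * infDist u Θ := by
          rw [dist_eq_norm, add_sub_cancel_left, norm_smul, Real.norm_of_nonneg ht,
            ← dist_eq_norm, hup]
    have hdist_Θ := hΘconv.one_add_mul_infDist_le_infDist_add_smul_sub (u := u) hp ht
    linarith [hf (u + t • (u - proj n Θ u)), hf_ge y q hyq, hmax q hq]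

theorem solution_set_representation (n : ℕ)
    (Ω Θ : Set (EuclideanSpace ℝ (Fin n)))
    (hΩ : Ω.Nonempty) (hΩc : IsClosed Ω) (hΩconv : Convex ℝ Ω)
    (hΘ : Θ.Nonempty) (hΘc : IsClosed Θ) (hΘconv : Convex ℝ Θ)
    (hdiff : (Ω \ Θ).Nonempty)
    (f : EuclideanSpace ℝ (Fin n) → ℝ)
    (hf : ∀ x, f x = Metric.infDist x Ω - Metric.infDist x Θ) :
    {x | ∀ y, f x ≤ f y} =
      {x | ∃ ub, (ub ∈ Ω ∧ ∀ u ∈ Ω, Metric.infDist u Θ ≤ Metric.infDist ub Θ) ∧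
        ∃ t : ℝ, 0 ≤ t ∧ x = ub + t • (ub - proj n Θ ub)} :=
  solution_set_representation_general n Ω Θ hΩ hΩc hΘ hΘc hΘconv hdiff f hf
end

section
/- Let Ω, Θ be nonempty closed convex sets in R^n with f(x) = d(x; Ω) − d(x; Θ). If f has a unique global minimizer, then Ω ⊂ Θ; moreover Ω must be a singleton {u} with u in the interior of Θ. (If u were a boundary point of Θ, taking any nonzero v ∈ N(u; Θ) gives f(u + tv) = 0 for all t ≥ 0, yielding a ray of minimizers.) -/
/-!
Let `u` be the unique minimizer of `f = d_Ω - d_Θ`. Moving `u` to a nearest point of `Ω` lowers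
`d_Ω` by `d_Ω(u)` and raises `d_Θ` by at most as much, so `u ∈ Ω`. If `v` lies in the normal cone
of `Θ` at `q ∈ Θ`, then `d_Θ(q + s v) = s ‖v‖` for `s ≥ 0`; so if `u ∈ Ω` lies on this ray, a step
from `u` by `v` raises `d_Θ` by `‖v‖` and `d_Ω` by at most `‖v‖`, and uniqueness forces `v = 0`.
For `q` the projection of `u` onto `Θ` this gives `u ∈ Θ`, hence `min f = 0`, and `f ≤ 0` on `Ω`
gives `Ω = {u}`. For `q = u` it rules out `u ∈ ∂Θ`, where the normal cone is nontrivial.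
-/

open Metric Set
open scoped RealInnerProductSpace

section NormalCone

variable {E : Type*} [NormedAddCommGroup E] [InnerProductSpace ℝ E]

def normalCone (K : Set E) (q : E) : Set E :=
  {v | ∀ z ∈ K, ⟪v, z - q⟫ ≤ 0}

lemma smul_mem_normalCone {K : Set E} {q v : E} (hv : v ∈ normalCone K q) {t : ℝ} (ht : 0 ≤ t) :
    t • v ∈ normalCone K q := fun z hz => by
  rw [real_inner_smul_left]
  exact mul_nonpos_of_nonneg_of_nonpos ht (hv z hz)

lemma infDist_add_of_mem_normalCone {K : Set E} {q v : E} (hq : q ∈ K)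
    (hv : v ∈ normalCone K q) : infDist (q + v) K = ‖v‖ := by
  refine le_antisymm (by simpa using infDist_le_dist_of_mem (x := q + v) hq) ?_
  refine (le_infDist ⟨q, hq⟩).2 fun z hz => ?_
  rcases eq_or_ne v 0 with rfl | hv0
  · simp
  refine le_of_mul_le_mul_left ?_ (norm_pos_iff.2 hv0)
  calc ‖v‖ * ‖v‖ = ⟪v, v⟫ := (real_inner_self_eq_norm_mul_norm v).symm
    _ ≤ ⟪v, v⟫ - ⟪v, z - q⟫ := by linarith [hv z hz]
    _ = ⟪v, q + v - z⟫ := by rw [← inner_sub_right]; congr 1; abel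
    _ ≤ ‖v‖ * dist (q + v) z := by rw [dist_eq_norm]; exact real_inner_le_norm _ _

lemma exists_sub_mem_normalCone [CompleteSpace E] {K : Set E} (hne : K.Nonempty)
    (hK : IsClosed K) (hconv : Convex ℝ K) (x : E) : ∃ q ∈ K, x - q ∈ normalCone K q := by
  obtain ⟨q, hq, hmin⟩ := exists_norm_eq_iInf_of_complete_convex hne hK.isComplete hconv x
  exact ⟨q, hq, (norm_eq_iInf_iff_real_inner_le_zero hconv hq).1 hmin⟩

lemma exists_ne_zero_mem_normalCone [FiniteDimensional ℝ E] {K : Set E} {q : E}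
    (hK : Convex ℝ K) (hq : q ∈ K) (hqi : q ∉ interior K) : ∃ v ≠ 0, v ∈ normalCone K q := by
  rcases (interior K).eq_empty_or_nonempty with hint | hint
  · -- `K` lies in a proper affine subspace, and any normal to that subspace is normal to `K`.
    have hdir : (affineSpan ℝ K).direction ≠ ⊤ := fun h => by
      rw [AffineSubspace.direction_eq_top_iff_of_nonempty ((affineSpan_nonempty ℝ).2 ⟨q, hq⟩),
        ← hK.interior_nonempty_iff_affineSpan_eq_top, hint] at h
      exact not_nonempty_empty h
    obtain ⟨v, hv, hv0⟩ :=
      Submodule.exists_mem_ne_zero_of_ne_bot (Submodule.orthogonal_eq_bot_iff.not.2 hdir)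
    refine ⟨v, hv0, fun z hz => ?_⟩
    rw [real_inner_comm, hv (z - q) (AffineSubspace.vsub_mem_direction
      (subset_affineSpan ℝ K hz) (subset_affineSpan ℝ K hq))]
  · obtain ⟨g, hg0, hg⟩ := geometric_hahn_banach_of_nonempty_interior_point hK hqi hint
    refine ⟨(InnerProductSpace.toDual ℝ E).symm g, by simpa using hg0, fun z hz => ?_⟩
    rw [InnerProductSpace.toDual_symm_apply, map_sub]
    linarith [hg z hz]

end NormalCone

lemma exists_mem_infDist_sub_infDist_le {α : Type*} [PseudoMetricSpace α] [ProperSpace α]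
    {Ω : Set α} (Θ : Set α) (hΩ : Ω.Nonempty) (hΩc : IsClosed Ω) (x : α) :
    ∃ p ∈ Ω, infDist p Ω - infDist p Θ ≤ infDist x Ω - infDist x Θ := by
  obtain ⟨p, hp, hdist⟩ := hΩc.exists_infDist_eq_dist hΩ x
  refine ⟨p, hp, ?_⟩
  rw [infDist_zero_of_mem hp]
  linarith [infDist_le_infDist_add_dist (x := x) (y := p) (s := Θ)]

lemma infDist_sub_infDist_add_le_of_mem_normalCone {E : Type*} [NormedAddCommGroup E]
    [InnerProductSpace ℝ E]
    {Ω Θ : Set E} {u q v : E} {t : ℝ} (hu : u ∈ Ω) (hq : q ∈ Θ) (hv : v ∈ normalCone Θ q)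
    (ht : 0 ≤ t) (huq : u = q + t • v) :
    infDist (u + v) Ω - infDist (u + v) Θ ≤ infDist u Ω - infDist u Θ := by
  have hΩ : infDist (u + v) Ω ≤ ‖v‖ := by simpa using infDist_le_dist_of_mem (x := u + v) hu
  have hΘu : infDist u Θ = t * ‖v‖ := by
    rw [huq, infDist_add_of_mem_normalCone hq (smul_mem_normalCone hv ht), norm_smul,
      Real.norm_of_nonneg ht]
  have hΘuv : infDist (u + v) Θ = (t + 1) * ‖v‖ := by
    have ht1 : 0 ≤ t + 1 := by linarith
    rw [huq, add_assoc, show t • v + v = (t + 1) • v by rw [add_smul, one_smul],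
      infDist_add_of_mem_normalCone hq (smul_mem_normalCone hv ht1), norm_smul,
      Real.norm_of_nonneg ht1]
  rw [infDist_zero_of_mem hu]
  linarith

theorem unique_min_implies_singleton_interior_general (n : ℕ)
    (Ω Θ : Set (EuclideanSpace ℝ (Fin n)))
    (hΩ : Ω.Nonempty) (hΩc : IsClosed Ω)
    (hΘ : Θ.Nonempty) (hΘc : IsClosed Θ) (hΘconv : Convex ℝ Θ)
    (f : EuclideanSpace ℝ (Fin n) → ℝ)
    (hf : ∀ x, f x = Metric.infDist x Ω - Metric.infDist x Θ)
    (huniq : ∃ xb, (∀ x, f xb ≤ f x) ∧ ∀ y, (∀ x, f y ≤ f x) → y = xb) :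
    Ω ⊆ Θ ∧ ∃ u, Ω = {u} ∧ u ∈ interior Θ := by
  obtain ⟨u, hmin, huniq⟩ := huniq
  have eq_of_le : ∀ y, f y ≤ f u → y = u := fun y hy => huniq y fun x => hy.trans (hmin x)
  have huΩ : u ∈ Ω := by
    obtain ⟨p, hp, hle⟩ := exists_mem_infDist_sub_infDist_le Θ hΩ hΩc u
    rwa [eq_of_le p (by simpa only [hf] using hle)] at hp
  have huΘ : u ∈ Θ := by
    obtain ⟨q, hq, hnormal⟩ := exists_sub_mem_normalCone hΘ hΘc hΘconv u
    have h := eq_of_le _ <| by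
      simpa only [hf] using
        infDist_sub_infDist_add_le_of_mem_normalCone huΩ hq hnormal zero_le_one (by simp)
    rw [add_eq_left, sub_eq_zero] at h
    exact h ▸ hq
  have hΩu : Ω = {u} := eq_singleton_iff_unique_mem.2 ⟨huΩ, fun w hw => eq_of_le w <| by
    simp [hf, infDist_zero_of_mem hw, infDist_zero_of_mem huΩ, infDist_zero_of_mem huΘ,
      infDist_nonneg]⟩
  refine ⟨hΩu ▸ singleton_subset_iff.2 huΘ, u, hΩu, ?_⟩
  by_contra hint
  obtain ⟨v, hv0, hv⟩ := exists_ne_zero_mem_normalCone hΘconv huΘ hint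
  refine hv0 (add_eq_left.1 (eq_of_le _ ?_))
  simpa only [hf] using infDist_sub_infDist_add_le_of_mem_normalCone huΩ huΘ hv le_rfl (by simp)

theorem unique_min_implies_singleton_interior (n : ℕ)
    (Ω Θ : Set (EuclideanSpace ℝ (Fin n)))
    (hΩ : Ω.Nonempty) (hΩc : IsClosed Ω) (hΩconv : Convex ℝ Ω)
    (hΘ : Θ.Nonempty) (hΘc : IsClosed Θ) (hΘconv : Convex ℝ Θ)
    (f : EuclideanSpace ℝ (Fin n) → ℝ)
    (hf : ∀ x, f x = Metric.infDist x Ω - Metric.infDist x Θ)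
    (huniq : ∃ xb, (∀ x, f xb ≤ f x) ∧ ∀ y, (∀ x, f y ≤ f x) → y = xb) :
    Ω ⊆ Θ ∧ ∃ u, Ω = {u} ∧ u ∈ interior Θ :=
  unique_min_implies_singleton_interior_general n Ω Θ hΩ hΩc hΘ hΘc hΘconv f hf huniq
end

section
/- In the setting of the generalized Weiszfeld algorithm (Ω_i nonempty closed convex, S nonempty closed convex disjoint from each Ω_i, α_i > 0, λ > 0, v ∈ R^n, φ_v(x) = Σ_i α_i d(x; Ω_i) + (λ/2)‖x‖² − ⟨v, x⟩), a point x̄ ∈ S satisfies P(F_v(x̄); S) = x̄ if and only if x̄ is the unique minimizer of φ_v over S. -/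
noncomputable def phi (n p : ℕ) (Ω : Fin p → Set (EuclideanSpace ℝ (Fin n)))
    (α : Fin p → ℝ) (lam : ℝ) (v x : EuclideanSpace ℝ (Fin n)) : ℝ :=
  ∑ i, α i * Metric.infDist x (Ω i) + lam / 2 * ‖x‖ ^ 2 - (inner ℝ v x : ℝ)

noncomputable def Fmap (n p : ℕ) (Ω : Fin p → Set (EuclideanSpace ℝ (Fin n)))
    (α : Fin p → ℝ) (lam : ℝ) (v x : EuclideanSpace ℝ (Fin n)) :
    EuclideanSpace ℝ (Fin n) :=
  (∑ i, α i / Metric.infDist x (Ω i) + lam)⁻¹ •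
    ((∑ i, (α i / Metric.infDist x (Ω i)) • proj n (Ω i) x) + v)

open Metric Filter Topology
open scoped RealInnerProductSpace

section InnerProductSpace

variable {E : Type*} [NormedAddCommGroup E] [InnerProductSpace ℝ E]

theorem quadratic_add (lam : ℝ) (v x u : E) :
    lam / 2 * ‖x + u‖ ^ 2 - ⟪v, x + u⟫
      = lam / 2 * ‖x‖ ^ 2 - ⟪v, x⟫ + ⟪lam • x - v, u⟫ + lam / 2 * ‖u‖ ^ 2 := by
  rw [norm_add_sq_real, inner_add_right, inner_sub_left, real_inner_smul_left]
  ring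

theorem norm_add_le_norm_add_div {a : E} (ha : a ≠ 0) (u : E) :
    ‖a + u‖ ≤ ‖a‖ + (⟪a, u⟫ + ‖u‖ ^ 2 / 2) / ‖a‖ := by
  rw [← sub_le_iff_le_add', le_div_iff₀ (norm_pos_iff.2 ha)]
  nlinarith [norm_add_sq_real a u, sq_nonneg (‖a + u‖ - ‖a‖)]

theorem infDist_add_le {Ω : Set E} {x p : E} (hp : p ∈ Ω) (hx : x ≠ p) (u : E) :
    infDist (x + u) Ω ≤ ‖x - p‖ + (⟪x - p, u⟫ + ‖u‖ ^ 2 / 2) / ‖x - p‖ :=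
  calc infDist (x + u) Ω ≤ dist (x + u) p := infDist_le_dist_of_mem hp
    _ = ‖(x - p) + u‖ := by rw [dist_eq_norm, sub_add_eq_add_sub]
    _ ≤ _ := norm_add_le_norm_add_div (sub_ne_zero.2 hx) u

theorem le_infDist_add {Ω : Set E} {x p : E} (hp : p ∈ Ω)
    (hvi : ∀ w ∈ Ω, ⟪x - p, w - p⟫ ≤ 0) (u : E) :
    ‖x - p‖ + ⟪x - p, u⟫ / ‖x - p‖ ≤ infDist (x + u) Ω := by
  rcases eq_or_ne x p with rfl | hx
  · simpa using infDist_nonneg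
  have hpos : 0 < ‖x - p‖ := norm_pos_iff.2 (sub_ne_zero.2 hx)
  refine (le_infDist ⟨p, hp⟩).2 fun w hw => ?_
  have hsplit : ⟪x - p, x + u - w⟫ = ‖x - p‖ ^ 2 + ⟪x - p, u⟫ - ⟪x - p, w - p⟫ := by
    rw [← real_inner_self_eq_norm_sq, ← inner_add_right, ← inner_sub_right]
    congr 1; abel
  have hcs := real_inner_le_norm (x - p) (x + u - w)
  rw [dist_eq_norm, ← le_sub_iff_add_le', div_le_iff₀ hpos]
  nlinarith [hvi w hw]

theorem eq_of_inner_sub_nonpos {z y y' : E} (h : ⟪z - y, y' - y⟫ ≤ 0)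
    (h' : ⟪z - y', y - y'⟫ ≤ 0) : y = y' := by
  have hsq : ⟪z - y, y' - y⟫ + ⟪z - y', y - y'⟫ = ‖y' - y‖ ^ 2 := by
    rw [← real_inner_self_eq_norm_sq, ← neg_sub y' y, inner_neg_right, ← sub_eq_add_neg,
      ← inner_sub_left, sub_sub_sub_cancel_left]
  have : ‖y' - y‖ ^ 2 = 0 := le_antisymm (hsq ▸ add_nonpos h h') (sq_nonneg _)
  exact (sub_eq_zero.1 (norm_eq_zero.1 (pow_eq_zero_iff two_ne_zero |>.1 this))).symm

theorem dist_eq_infDist_iff_inner_le_zero {Q : Set E} (hQ : Convex ℝ Q) {z y : E}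
    (hy : y ∈ Q) :
    dist z y = infDist z Q ↔ ∀ w ∈ Q, ⟪z - y, w - y⟫ ≤ 0 := by
  simp_rw [infDist_eq_iInf, dist_eq_norm]
  exact norm_eq_iInf_iff_real_inner_le_zero hQ hy

theorem inner_sub_nonneg_of_isMinOn {f : E → ℝ} {S : Set E} {x g w : E} {L : ℝ}
    (hS : Convex ℝ S) (hx : x ∈ S) (hmin : IsMinOn f S x)
    (hup : ∀ u, f (x + u) ≤ f x + ⟪g, u⟫ + L * ‖u‖ ^ 2) (hw : w ∈ S) :
    0 ≤ ⟪g, w - x⟫ := by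
  have hslope : ∀ t ∈ Set.Ioc (0 : ℝ) 1, 0 ≤ ⟪g, w - x⟫ + t * (L * ‖w - x‖ ^ 2) := by
    rintro t ⟨ht0, ht1⟩
    have hle := (isMinOn_iff.1 hmin _ (hS.add_smul_sub_mem hx hw ⟨ht0.le, ht1⟩)).trans
      (hup (t • (w - x)))
    rw [real_inner_smul_right, norm_smul, Real.norm_of_nonneg ht0.le] at hle
    exact nonneg_of_mul_nonneg_right (by nlinarith) ht0
  have hlim : Tendsto (fun t : ℝ => ⟪g, w - x⟫ + t * (L * ‖w - x‖ ^ 2)) (𝓝[>] 0)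
      (𝓝 ⟪g, w - x⟫) := by
    refine tendsto_nhdsWithin_of_tendsto_nhds ?_
    exact (continuous_const.add (continuous_id.mul continuous_const)).tendsto' 0 _ (by simp)
  exact ge_of_tendsto hlim (eventually_of_mem (Ioc_mem_nhdsGT one_pos) hslope)

theorem inner_sub_nonneg_iff_unique_min {f : E → ℝ} {S : Set E} {x g : E} {μ L : ℝ}
    (hS : Convex ℝ S) (hx : x ∈ S) (hμ : 0 < μ)
    (hlow : ∀ u, f x + ⟪g, u⟫ + μ * ‖u‖ ^ 2 ≤ f (x + u))
    (hup : ∀ u, f (x + u) ≤ f x + ⟪g, u⟫ + L * ‖u‖ ^ 2) :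
    (∀ w ∈ S, 0 ≤ ⟪g, w - x⟫) ↔
      (∀ y ∈ S, f x ≤ f y) ∧ ∀ y ∈ S, (∀ z ∈ S, f y ≤ f z) → y = x := by
  refine ⟨fun hvi => ?_, fun ⟨hmin, _⟩ w hw =>
    inner_sub_nonneg_of_isMinOn hS hx (isMinOn_iff.2 hmin) hup hw⟩
  have hgrowth : ∀ y ∈ S, f x + μ * ‖y - x‖ ^ 2 ≤ f y := fun y hy => by
    have := hlow (y - x)
    rw [add_sub_cancel] at this
    linarith [hvi y hy]
  refine ⟨fun y hy => ?_, fun y hy hymin => ?_⟩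
  · nlinarith [hgrowth y hy, sq_nonneg ‖y - x‖]
  · have hsq : ‖y - x‖ ^ 2 ≤ 0 :=
      nonpos_of_mul_nonpos_right (by linarith [hgrowth y hy, hymin x hx]) hμ
    exact sub_eq_zero.1 (norm_eq_zero.1 (pow_eq_zero_iff two_ne_zero |>.1
      (le_antisymm hsq (sq_nonneg _))))

end InnerProductSpace

section Weiszfeld

variable {n p : ℕ} {Ω : Fin p → Set (EuclideanSpace ℝ (Fin n))} {α : Fin p → ℝ} {lam : ℝ}
  {v x : EuclideanSpace ℝ (Fin n)}

theorem proj_spec {Q : Set (EuclideanSpace ℝ (Fin n))} (hQ : Q.Nonempty) (hc : IsClosed Q)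
    (x : EuclideanSpace ℝ (Fin n)) : proj n Q x ∈ Q ∧ dist x (proj n Q x) = infDist x Q := by
  obtain ⟨q, hq, hdist⟩ := hc.exists_infDist_eq_dist hQ x
  have h : ∃ q ∈ Q, dist x q = infDist x Q := ⟨q, hq, hdist.symm⟩
  rw [proj, dif_pos h]
  exact h.choose_spec

theorem norm_sub_proj {Q : Set (EuclideanSpace ℝ (Fin n))} (hQ : Q.Nonempty) (hc : IsClosed Q)
    (x : EuclideanSpace ℝ (Fin n)) : ‖x - proj n Q x‖ = infDist x Q := by
  rw [← dist_eq_norm, (proj_spec hQ hc x).2]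

theorem proj_eq_iff {Q : Set (EuclideanSpace ℝ (Fin n))} (hc : IsClosed Q) (hconv : Convex ℝ Q)
    {z y : EuclideanSpace ℝ (Fin n)} (hy : y ∈ Q) :
    proj n Q z = y ↔ ∀ w ∈ Q, ⟪z - y, w - y⟫ ≤ 0 := by
  obtain ⟨hmem, hdist⟩ := proj_spec ⟨y, hy⟩ hc z
  have hvi := (dist_eq_infDist_iff_inner_le_zero hconv hmem).1 hdist
  exact ⟨fun h => h ▸ hvi, fun h => eq_of_inner_sub_nonpos (hvi y hy) (h _ hmem)⟩

theorem inner_sub_proj_le_zero {Q : Set (EuclideanSpace ℝ (Fin n))} (hQ : Q.Nonempty)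
    (hc : IsClosed Q) (hconv : Convex ℝ Q) (x : EuclideanSpace ℝ (Fin n)) :
    ∀ w ∈ Q, ⟪x - proj n Q x, w - proj n Q x⟫ ≤ 0 :=
  (proj_eq_iff hc hconv (proj_spec hQ hc x).1).1 rfl

noncomputable def phiGrad (n p : ℕ) (Ω : Fin p → Set (EuclideanSpace ℝ (Fin n)))
    (α : Fin p → ℝ) (lam : ℝ) (v x : EuclideanSpace ℝ (Fin n)) : EuclideanSpace ℝ (Fin n) :=
  ∑ i, (α i / infDist x (Ω i)) • (x - proj n (Ω i) x) + lam • x - v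

theorem inner_phiGrad (u : EuclideanSpace ℝ (Fin n)) :
    ⟪phiGrad n p Ω α lam v x, u⟫
      = ∑ i, α i / infDist x (Ω i) * ⟪x - proj n (Ω i) x, u⟫ + ⟪lam • x - v, u⟫ := by
  rw [phiGrad, add_sub_assoc, inner_add_left, sum_inner]
  simp only [real_inner_smul_left]

theorem Fmap_eq_sub_smul_phiGrad (hc : ∑ i, α i / infDist x (Ω i) + lam ≠ 0) :
    Fmap n p Ω α lam v x
      = x - (∑ i, α i / infDist x (Ω i) + lam)⁻¹ • phiGrad n p Ω α lam v x := by
  rw [Fmap, eq_sub_iff_add_eq, ← smul_add, inv_smul_eq_iff₀ hc, phiGrad]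
  simp only [smul_sub, Finset.sum_sub_distrib, add_smul, Finset.sum_smul]
  abel

theorem phi_add_inner_phiGrad_le (hne : ∀ i, (Ω i).Nonempty) (hc : ∀ i, IsClosed (Ω i))
    (hconv : ∀ i, Convex ℝ (Ω i)) (hα : ∀ i, 0 ≤ α i) (u : EuclideanSpace ℝ (Fin n)) :
    phi n p Ω α lam v x + ⟪phiGrad n p Ω α lam v x, u⟫ + lam / 2 * ‖u‖ ^ 2
      ≤ phi n p Ω α lam v (x + u) := by
  have hterm : ∀ i, α i * infDist x (Ω i) + α i / infDist x (Ω i) * ⟪x - proj n (Ω i) x, u⟫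
      ≤ α i * infDist (x + u) (Ω i) := fun i => by
    have h := le_infDist_add (proj_spec (hne i) (hc i) x).1
      (inner_sub_proj_le_zero (hne i) (hc i) (hconv i) x) u
    rw [norm_sub_proj (hne i) (hc i)] at h
    calc _ = α i * (infDist x (Ω i) + ⟪x - proj n (Ω i) x, u⟫ / infDist x (Ω i)) := by ring
      _ ≤ _ := mul_le_mul_of_nonneg_left h (hα i)
  have hsum := Finset.sum_le_sum fun i (_ : i ∈ Finset.univ) => hterm i
  rw [Finset.sum_add_distrib] at hsum
  simp only [phi, add_sub_assoc, quadratic_add, inner_phiGrad]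
  linarith

theorem phi_add_le (hne : ∀ i, (Ω i).Nonempty) (hc : ∀ i, IsClosed (Ω i)) (hx : ∀ i, x ∉ Ω i)
    (hα : ∀ i, 0 ≤ α i) (u : EuclideanSpace ℝ (Fin n)) :
    phi n p Ω α lam v (x + u) ≤ phi n p Ω α lam v x + ⟪phiGrad n p Ω α lam v x, u⟫
      + (∑ i, α i / infDist x (Ω i) + lam) / 2 * ‖u‖ ^ 2 := by
  have hterm : ∀ i, α i * infDist (x + u) (Ω i) ≤ α i * infDist x (Ω i)
      + α i / infDist x (Ω i) * ⟪x - proj n (Ω i) x, u⟫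
      + α i / infDist x (Ω i) * ‖u‖ ^ 2 / 2 := fun i => by
    have hmem := (proj_spec (hne i) (hc i) x).1
    have h := infDist_add_le hmem (ne_of_mem_of_not_mem hmem (hx i)).symm u
    rw [norm_sub_proj (hne i) (hc i)] at h
    calc _ ≤ α i * (infDist x (Ω i)
          + (⟪x - proj n (Ω i) x, u⟫ + ‖u‖ ^ 2 / 2) / infDist x (Ω i)) :=
          mul_le_mul_of_nonneg_left h (hα i)
      _ = _ := by ring
  have hsum := Finset.sum_le_sum fun i (_ : i ∈ Finset.univ) => hterm i
  rw [Finset.sum_add_distrib, Finset.sum_add_distrib, ← Finset.sum_div,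
    ← Finset.sum_mul] at hsum
  simp only [phi, add_sub_assoc, quadratic_add, inner_phiGrad]
  linarith

end Weiszfeld

theorem weiszfeld_fixed_point_iff_unique_min_general (n p : ℕ)
    (Ω : Fin p → Set (EuclideanSpace ℝ (Fin n)))
    (hΩ : ∀ i, (Ω i).Nonempty ∧ IsClosed (Ω i) ∧ Convex ℝ (Ω i))
    (S : Set (EuclideanSpace ℝ (Fin n)))
    (hSc : IsClosed S) (hSconv : Convex ℝ S)
    (hdisj : ∀ i, S ∩ Ω i = ∅)
    (α : Fin p → ℝ) (hα : ∀ i, 0 < α i)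
    (lam : ℝ) (hlam : 0 < lam)
    (v : EuclideanSpace ℝ (Fin n))
    (xb : EuclideanSpace ℝ (Fin n)) (hxb : xb ∈ S) :
    proj n S (Fmap n p Ω α lam v xb) = xb ↔
      ((∀ x ∈ S, phi n p Ω α lam v xb ≤ phi n p Ω α lam v x) ∧
       ∀ y ∈ S, (∀ x ∈ S, phi n p Ω α lam v y ≤ phi n p Ω α lam v x) → y = xb) := by
  have hne i := (hΩ i).1
  have hc i := (hΩ i).2.1
  have hconv i := (hΩ i).2.2
  have hα' i := (hα i).le
  have hout : ∀ i, xb ∉ Ω i := fun i h => (hdisj i).subset ⟨hxb, h⟩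
  have hweight : 0 < ∑ i, α i / infDist xb (Ω i) + lam :=
    add_pos_of_nonneg_of_pos (Finset.sum_nonneg fun i _ => div_nonneg (hα' i) infDist_nonneg)
      hlam
  rw [proj_eq_iff hSc hSconv hxb, Fmap_eq_sub_smul_phiGrad hweight.ne',
    ← inner_sub_nonneg_iff_unique_min hSconv hxb (half_pos hlam)
      (phi_add_inner_phiGrad_le hne hc hconv hα')
      (phi_add_le hne hc hout hα')]
  refine forall₂_congr fun w _ => ?_
  rw [sub_sub_cancel_left, inner_neg_left, real_inner_smul_left, neg_nonpos]
  exact mul_nonneg_iff_of_pos_left (inv_pos.2 hweight)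

theorem weiszfeld_fixed_point_iff_unique_min (n p : ℕ)
    (Ω : Fin p → Set (EuclideanSpace ℝ (Fin n)))
    (hΩ : ∀ i, (Ω i).Nonempty ∧ IsClosed (Ω i) ∧ Convex ℝ (Ω i))
    (S : Set (EuclideanSpace ℝ (Fin n)))
    (hS : S.Nonempty) (hSc : IsClosed S) (hSconv : Convex ℝ S)
    (hdisj : ∀ i, S ∩ Ω i = ∅)
    (α : Fin p → ℝ) (hα : ∀ i, 0 < α i)
    (lam : ℝ) (hlam : 0 < lam)
    (v : EuclideanSpace ℝ (Fin n))
    (xb : EuclideanSpace ℝ (Fin n)) (hxb : xb ∈ S) :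
    proj n S (Fmap n p Ω α lam v xb) = xb ↔
      ((∀ x ∈ S, phi n p Ω α lam v xb ≤ phi n p Ω α lam v x) ∧
       ∀ y ∈ S, (∀ x ∈ S, phi n p Ω α lam v y ≤ phi n p Ω α lam v x) → y = xb) :=
  weiszfeld_fixed_point_iff_unique_min_general n p Ω hΩ S hSc hSconv hdisj α hα lam hlam v xb hxb
end
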